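/- arXiv:1507.07170 — 9 statements merged into one kernel-verified Lean document; each statement's English description precedes it below -/
import Mathlib

section
/- For every real number t < 0, the standard normal CDF satisfies Φ(t) < e^t/(1+e^t). -/
open Real

/-- The standard normal cumulative distribution function. -/
noncomputable def stdNormalCDF (t : ℝ) : ℝ :=
  ∫ s in Set.Iic t, (Real.sqrt (2 * π))⁻¹ * Real.exp (-s ^ 2 / 2)

section Aux
open MeasureTheory intervalIntegral Set Filter


noncomputable def gaussPdf (s : ℝ) : ℝ := (Real.sqrt (2 * π))⁻¹ * Real.exp (-s ^ 2 / 2)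

lemma gaussPdf_integrable : Integrable gaussPdf := by
  have h := (integrable_exp_neg_mul_sq (by norm_num : (0:ℝ) < 1/2)).const_mul (Real.sqrt (2 * π))⁻¹
  convert h using 2 with s
  unfold gaussPdf; ring_nf

noncomputable def Phi (t : ℝ) : ℝ := ∫ s in Set.Iic t, gaussPdf s

lemma Phi_zero : Phi 0 = 1 / 2 := by
  have hint : Integrable gaussPdf := gaussPdf_integrable
  have hsymm : ∫ s in Iic (0:ℝ), gaussPdf s = ∫ s in Ioi (0:ℝ), gaussPdf s := by
    have := integral_comp_neg_Iic (0:ℝ) gaussPdf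
    rw [neg_zero] at this
    rw [← this]
    congr 1; ext s; unfold gaussPdf; ring_nf
  have htot : (∫ s in Iic (0:ℝ), gaussPdf s) + ∫ s in Ioi (0:ℝ), gaussPdf s = ∫ s, gaussPdf s :=
    integral_Iic_add_Ioi hint.integrableOn hint.integrableOn
  have hval : ∫ s, gaussPdf s = 1 := by
    unfold gaussPdf
    rw [MeasureTheory.integral_const_mul]
    have : ∀ s : ℝ, Real.exp (-s ^ 2 / 2) = Real.exp (-(1/2) * s ^ 2) := by intro s; ring_nf
    simp_rw [this, integral_gaussian]
    rw [show π / (1/2) = 2 * π by ring]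
    rw [inv_mul_cancel₀ (by positivity)]
    done
  unfold Phi
  nlinarith [hsymm, htot, hval]
lemma Phi_eq (t : ℝ) : Phi t = Phi 0 + ∫ s in (0:ℝ)..t, gaussPdf s := by
  have h := integral_Iic_sub_Iic (μ := volume) (f := gaussPdf) (a := (0:ℝ)) (b := t)
    gaussPdf_integrable.integrableOn gaussPdf_integrable.integrableOn
  unfold Phi; linarith

lemma gaussPdf_cont : Continuous gaussPdf := by
  unfold gaussPdf; continuity

lemma Phi_hasDerivAt (t : ℝ) : HasDerivAt Phi (gaussPdf t) t := by
  have h1 : HasDerivAt (fun u => ∫ s in (0:ℝ)..u, gaussPdf s) (gaussPdf t) t :=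
    intervalIntegral.integral_hasDerivAt_right gaussPdf_integrable.intervalIntegrable
      (gaussPdf_cont.stronglyMeasurableAtFilter _ _) gaussPdf_cont.continuousAt
  have : Phi = fun u => Phi 0 + ∫ s in (0:ℝ)..u, gaussPdf s := funext Phi_eq
  rw [this]
  exact (h1.const_add (Phi 0))

lemma Phi_tendsto_atBot : Tendsto Phi atBot (nhds 0) := by
  have h : Tendsto (fun t => ∫ s in t..(0:ℝ), gaussPdf s) atBot
      (nhds (∫ s in Iic (0:ℝ), gaussPdf s)) :=
    intervalIntegral_tendsto_integral_Iic 0 gaussPdf_integrable.integrableOn tendsto_id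
  have heq : ∀ t : ℝ, Phi t = Phi 0 - ∫ s in t..(0:ℝ), gaussPdf s := by
    intro t
    rw [Phi_eq t, intervalIntegral.integral_symm]
    ring
  have hz : (Phi 0 : ℝ) - ∫ s in Iic (0:ℝ), gaussPdf s = 0 := by unfold Phi; ring
  have h2 := (tendsto_const_nhds (x := Phi 0) (f := atBot)).sub h
  rw [hz] at h2
  exact h2.congr fun t => (heq t).symm
noncomputable def logistic (t : ℝ) : ℝ := Real.exp t / (1 + Real.exp t)

lemma one_add_exp_pos (t : ℝ) : 0 < 1 + Real.exp t := by positivity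

lemma logistic_hasDerivAt (t : ℝ) :
    HasDerivAt logistic (Real.exp t / (1 + Real.exp t) ^ 2) t := by
  have h := (Real.hasDerivAt_exp t).div ((Real.hasDerivAt_exp t).const_add 1)
    (one_add_exp_pos t).ne'
  refine h.congr_deriv ?_
  field_simp
  ring

lemma logistic_zero : logistic 0 = 1 / 2 := by unfold logistic; norm_num

lemma logistic_tendsto_atBot : Tendsto logistic atBot (nhds 0) := by
  have h := Real.tendsto_exp_atBot.div
    ((tendsto_const_nhds (x := (1:ℝ)) (f := atBot)).add Real.tendsto_exp_atBot)
    (by norm_num)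
  have h2 : Tendsto (Real.exp / fun x => 1 + Real.exp x) atBot (nhds 0) := by simpa using h
  exact h2

-- 1 + t < 2 e^t/(1+e^t) for t < 0
lemma psi_pos {t : ℝ} (ht : t < 0) : 1 + t < 2 * Real.exp t / (1 + Real.exp t) := by
  set g : ℝ → ℝ := fun x => 2 * Real.exp x / (1 + Real.exp x) - (1 + x) with hg
  have hderiv : ∀ x : ℝ, HasDerivAt g (2 * Real.exp x / (1 + Real.exp x) ^ 2 - 1) x := by
    intro x
    have h1 := (((Real.hasDerivAt_exp x).const_mul 2).div
      ((Real.hasDerivAt_exp x).const_add 1) (one_add_exp_pos x).ne')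
    have h2 := h1.sub ((hasDerivAt_id x).const_add 1)
    refine h2.congr_deriv ?_
    field_simp
    ring
  have hanti : StrictAnti g := by
    apply strictAnti_of_deriv_neg
    intro x
    rw [(hderiv x).deriv]
    have he := Real.exp_pos x
    have : 2 * Real.exp x < (1 + Real.exp x) ^ 2 := by nlinarith [sq_nonneg (1 - Real.exp x)]
    have hpos : (0:ℝ) < (1 + Real.exp x) ^ 2 := by positivity
    rw [sub_neg, div_lt_one hpos]
    exact this
  have := hanti ht
  have hg0 : g 0 = 0 := by simp [hg]; norm_num
  rw [hg0] at this
  have : 0 < 2 * Real.exp t / (1 + Real.exp t) - (1 + t) := this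
  linarith

noncomputable def dFun (t : ℝ) : ℝ :=
  t + t ^ 2 / 2 - 2 * Real.log (1 + Real.exp t) + Real.log (Real.sqrt (2 * π))

lemma dFun_hasDerivAt (t : ℝ) :
    HasDerivAt dFun (1 + t - 2 * (Real.exp t / (1 + Real.exp t))) t := by
  have hlog : HasDerivAt (fun x => Real.log (1 + Real.exp x)) (Real.exp t / (1 + Real.exp t)) t :=
    ((Real.hasDerivAt_exp t).const_add 1).log (one_add_exp_pos t).ne'
  have hsq : HasDerivAt (fun x : ℝ => x + x ^ 2 / 2) (1 + t) t := by
    have h2 := (hasDerivAt_id t).add ((hasDerivAt_pow 2 t).div_const 2)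
    refine h2.congr_deriv ?_
    push_cast; ring
  have := (hsq.sub (hlog.const_mul 2)).add_const (Real.log (Real.sqrt (2 * π)))
  exact this

lemma dFun_strictAntiOn : StrictAntiOn dFun (Iic 0) := by
  apply strictAntiOn_of_deriv_neg (convex_Iic 0)
  · exact fun x _ => ((dFun_hasDerivAt x).differentiableAt.continuousAt).continuousWithinAt
  · intro x hx
    rw [interior_Iic] at hx
    rw [(dFun_hasDerivAt x).deriv]
    have := psi_pos hx
    have h' : 2 * Real.exp x / (1 + Real.exp x) = 2 * (Real.exp x / (1 + Real.exp x)) := by ring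
    linarith
lemma gaussPdf_pos (s : ℝ) : 0 < gaussPdf s :=
  mul_pos (inv_pos.2 (Real.sqrt_pos.2 (by positivity))) (Real.exp_pos _)

lemma dFun_zero_neg : dFun 0 < 0 := by
  have heq : dFun 0 = Real.log (2 * π) / 2 - 2 * Real.log 2 := by
    unfold dFun
    rw [Real.exp_zero, Real.log_sqrt (by positivity)]
    norm_num
    ring
  have h1 : Real.log (2 * π) < Real.log 16 :=
    Real.log_lt_log (by positivity) (by nlinarith [pi_lt_d2])
  have h2 : Real.log 16 = 4 * Real.log 2 := by
    rw [show (16:ℝ) = 2 ^ 4 by norm_num, Real.log_pow]; norm_num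
  linarith

lemma dFun_neg_two_pos : 0 < dFun (-2) := by
  have heq : dFun (-2) = Real.log (2 * π) / 2 - 2 * Real.log (1 + Real.exp (-2)) := by
    unfold dFun
    rw [Real.log_sqrt (by positivity)]
    ring
  have h1 : Real.log (1 + Real.exp (-2)) ≤ Real.exp (-2) := by
    have := Real.log_le_sub_one_of_pos (one_add_exp_pos (-2))
    linarith
  have h7 : (7:ℝ) < Real.exp 2 := by
    have h := Real.exp_one_gt_d9
    have h2 : Real.exp 2 = Real.exp 1 * Real.exp 1 := by rw [← Real.exp_add]; norm_num
    nlinarith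
  have h2 : Real.exp (-2) < 1 / 7 := by
    rw [Real.exp_neg, one_div]
    exact inv_strictAnti₀ (by norm_num) h7
  have h3 : 1 ≤ Real.log (2 * π) := by
    rw [Real.le_log_iff_exp_le (by positivity)]
    nlinarith [Real.exp_one_lt_d9, pi_gt_three]
  linarith

lemma dFun_eq (t : ℝ) :
    dFun t = Real.log (Real.exp t / (1 + Real.exp t) ^ 2) - Real.log (gaussPdf t) := by
  have h1 : Real.log (Real.exp t / (1 + Real.exp t) ^ 2)
      = t - 2 * Real.log (1 + Real.exp t) := by
    rw [Real.log_div (Real.exp_ne_zero t) (pow_ne_zero 2 (one_add_exp_pos t).ne'),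
      Real.log_exp, Real.log_pow]
    push_cast; ring
  have h2 : Real.log (gaussPdf t) = -Real.log (Real.sqrt (2 * π)) - t ^ 2 / 2 := by
    unfold gaussPdf
    rw [Real.log_mul (inv_ne_zero (Real.sqrt_pos.2 (by positivity)).ne')
      (Real.exp_ne_zero _), Real.log_inv, Real.log_exp]
    ring
  rw [h1, h2]
  unfold dFun
  ring

lemma lt_of_dFun_neg {t : ℝ} (h : dFun t < 0) :
    Real.exp t / (1 + Real.exp t) ^ 2 < gaussPdf t := by
  have hL : 0 < Real.exp t / (1 + Real.exp t) ^ 2 := by positivity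
  rw [dFun_eq, sub_neg] at h
  exact (Real.log_lt_log_iff hL (gaussPdf_pos t)).mp h

lemma lt_of_dFun_pos {t : ℝ} (h : 0 < dFun t) :
    gaussPdf t < Real.exp t / (1 + Real.exp t) ^ 2 := by
  have hL : 0 < Real.exp t / (1 + Real.exp t) ^ 2 := by positivity
  rw [dFun_eq, sub_pos] at h
  exact (Real.log_lt_log_iff (gaussPdf_pos t) hL).mp h

lemma key : ∀ t : ℝ, t < 0 → Phi t < logistic t := by
  obtain ⟨t₀, ht₀mem, ht₀⟩ : ∃ t₀ ∈ Ioo (-2:ℝ) 0, dFun t₀ = 0 := by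
    have hcont : ContinuousOn dFun (Icc (-2:ℝ) 0) := fun x _ =>
      (dFun_hasDerivAt x).differentiableAt.continuousAt.continuousWithinAt
    have hsub := intermediate_value_Ioo' (by norm_num : (-2:ℝ) ≤ 0) hcont
    obtain ⟨t₀, hmem, heq⟩ := hsub ⟨dFun_zero_neg, dFun_neg_two_pos⟩
    exact ⟨t₀, hmem, heq⟩
  have ht₀0 : t₀ < 0 := ht₀mem.2
  set h : ℝ → ℝ := fun t => logistic t - Phi t with hh
  have hderiv : ∀ t, HasDerivAt h (Real.exp t / (1 + Real.exp t) ^ 2 - gaussPdf t) t :=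
    fun t => (logistic_hasDerivAt t).sub (Phi_hasDerivAt t)
  have hcont : Continuous h := by
    have : Differentiable ℝ h := fun t => (hderiv t).differentiableAt
    exact this.continuous
  have h0 : h 0 = 0 := by rw [hh]; simp only [logistic_zero, Phi_zero]; norm_num
  have hanti : StrictAntiOn h (Icc t₀ 0) := by
    apply strictAntiOn_of_deriv_neg (convex_Icc _ _) hcont.continuousOn
    intro x hx
    rw [interior_Icc] at hx
    rw [(hderiv x).deriv]
    have hdx : dFun x < 0 := by
      rw [← ht₀]
      exact dFun_strictAntiOn (le_of_lt ht₀0) (le_of_lt hx.2) hx.1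
    have := lt_of_dFun_neg hdx
    linarith
  have hmono : StrictMonoOn h (Iic t₀) := by
    apply strictMonoOn_of_deriv_pos (convex_Iic _) hcont.continuousOn
    intro x hx
    rw [interior_Iic] at hx
    rw [(hderiv x).deriv]
    have hdx : 0 < dFun x := by
      rw [← ht₀]
      exact dFun_strictAntiOn (le_of_lt (lt_trans hx ht₀0)) (le_of_lt ht₀0) hx
    have := lt_of_dFun_pos hdx
    linarith
  have htend : Tendsto h atBot (nhds 0) := by
    have := logistic_tendsto_atBot.sub Phi_tendsto_atBot
    simpa using this
  have hnonneg : ∀ t ≤ t₀, 0 ≤ h t := by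
    intro t ht
    refine le_of_tendsto htend ?_
    filter_upwards [eventually_le_atBot t] with s hs
    exact hmono.monotoneOn (le_trans hs ht) ht hs
  intro t ht
  have hgoal : 0 < h t := by
    rcases le_or_gt t₀ t with hcase | hcase
    · have := hanti ⟨hcase, ht.le⟩ ⟨ht₀0.le, le_refl 0⟩ ht
      rw [h0] at this
      exact this
    · have h1 : h (t - 1) < h t := hmono (by simp; linarith) (le_of_lt hcase) (by linarith)
      have h2 : 0 ≤ h (t - 1) := hnonneg _ (by linarith)
      linarith
  rw [hh] at hgoal
  simpa using sub_pos.mp hgoal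


lemma stdNormalCDF_eq_Phi : stdNormalCDF = Phi := rfl

end Aux

/-- For every real `t < 0`, `Φ(t) < e^t / (1 + e^t)`. -/
theorem stdNormalCDF_lt_logistic : ∀ t : ℝ, t < 0 →
    stdNormalCDF t < Real.exp t / (1 + Real.exp t) := by
  intro t ht
  rw [stdNormalCDF_eq_Phi]
  exact key t ht
end

section
/- The function u(t) = (t+1)²/4 − log(1+e^t) is strictly decreasing on (−∞, 0). -/
lemma key_ineq (t : ℝ) (ht : t < 0) : t + 1 < (1 - t) * Real.exp t := by
  rcases le_or_gt t (-1) with h | h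
  · have : (0:ℝ) < (1 - t) * Real.exp t := mul_pos (by linarith) (Real.exp_pos t)
    linarith
  · nlinarith [Real.add_one_le_exp t, Real.exp_pos t]

lemma hasDeriv_u (t : ℝ) :
    HasDerivAt (fun t : ℝ => (t + 1) ^ 2 / 4 - Real.log (1 + Real.exp t))
      ((t + 1) * 2 / 4 - Real.exp t / (1 + Real.exp t)) t := by
  have hpos : (0:ℝ) < 1 + Real.exp t := by positivity
  have h1 : HasDerivAt (fun x : ℝ => (x + 1) ^ 2 / 4) ((t + 1) * 2 / 4) t := by
    have := (((hasDerivAt_id t).add_const 1).pow 2).div_const 4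
    simpa [mul_comm, mul_assoc, mul_left_comm] using this
  have h2 : HasDerivAt (fun x : ℝ => Real.log (1 + Real.exp x))
      (Real.exp t / (1 + Real.exp t)) t := by
    have := ((Real.hasDerivAt_exp t).const_add 1).log hpos.ne'
    simpa using this
  exact h1.sub h2

/-- The function `u(t) = (t+1)²/4 − log(1+e^t)` is strictly decreasing on `(−∞, 0)`. -/
theorem strictAntiOn_sq_sub_log_one_add_exp :
    StrictAntiOn (fun t : ℝ => (t + 1) ^ 2 / 4 - Real.log (1 + Real.exp t)) (Set.Iio 0) := by
  apply strictAntiOn_of_deriv_neg (convex_Iio 0)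
  · exact fun t _ => (hasDeriv_u t).continuousAt.continuousWithinAt
  · intro t ht
    rw [interior_Iio] at ht
    rw [(hasDeriv_u t).deriv]
    have hpos : (0:ℝ) < 1 + Real.exp t := by positivity
    have hk := key_ineq t ht
    rw [div_sub_div _ _ (by norm_num) hpos.ne', div_neg_iff]
    right
    constructor
    · nlinarith
    · positivity
end

section
/- The derivative of the function t ↦ Φ(t) − e^t/(1+e^t) has at most one root on the negative reals; equivalently, there do not exist two distinct t₁, t₂ < 0 with (2π)^{-1/2} e^{-t_i²/2} = e^{t_i}/(1+e^{t_i})² for i = 1,2. -/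
open Real

private lemma key_neg (t : ℝ) (ht : t < 0) : t + 1 + (t - 1) * Real.exp t < 0 := by
  rcases le_or_gt t (-1) with h | h
  · nlinarith [Real.exp_pos t]
  · nlinarith [Real.add_one_lt_exp (ne_of_lt ht), Real.exp_pos t]

private lemma H_hasDeriv (t : ℝ) :
    HasDerivAt (fun s : ℝ => (s + 1) ^ 2 / 4 - Real.log (1 + Real.exp s))
      ((t + 1) / 2 - Real.exp t / (1 + Real.exp t)) t := by
  have h1 : HasDerivAt (fun s : ℝ => (s + 1) ^ 2 / 4) ((t + 1) / 2) t := by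
    have : HasDerivAt (fun s : ℝ => (s + 1) ^ 2) (2 * (t + 1) ^ 1 * 1) t :=
      (((hasDerivAt_id t).add_const 1).pow 2)
    have := this.div_const 4
    exact this.congr_deriv (by ring)
  have hpos : 1 + Real.exp t > 0 := by positivity
  have h2 : HasDerivAt (fun s : ℝ => Real.log (1 + Real.exp s))
      (Real.exp t / (1 + Real.exp t)) t :=
    ((Real.hasDerivAt_exp t).const_add 1).log (ne_of_gt hpos)
  exact h1.sub h2

private lemma H_strictAnti :
    StrictAntiOn (fun s : ℝ => (s + 1) ^ 2 / 4 - Real.log (1 + Real.exp s)) (Set.Iic 0) := by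
  apply strictAntiOn_of_deriv_neg (convex_Iic 0)
  · exact fun t _ => (H_hasDeriv t).continuousAt.continuousWithinAt
  · intro t ht
    rw [interior_Iic] at ht
    rw [(H_hasDeriv t).deriv]
    have hpos : (0:ℝ) < 1 + Real.exp t := by positivity
    have := key_neg t ht
    rw [sub_neg, div_lt_div_iff₀ (by norm_num) hpos]
    nlinarith

/-- There do not exist two distinct negative reals `t₁, t₂` with
`(2π)^{-1/2} e^{-tᵢ²/2} = e^{tᵢ}/(1+e^{tᵢ})²` for `i = 1, 2`; i.e. the derivative of
`t ↦ Φ(t) − e^t/(1+e^t)` has at most one root on the negative reals. -/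
theorem normal_density_eq_logistic_density_unique_root (t₁ t₂ : ℝ)
    (h₁ : t₁ < 0) (h₂ : t₂ < 0)
    (e₁ : (Real.sqrt (2 * π))⁻¹ * Real.exp (-t₁ ^ 2 / 2)
      = Real.exp t₁ / (1 + Real.exp t₁) ^ 2)
    (e₂ : (Real.sqrt (2 * π))⁻¹ * Real.exp (-t₂ ^ 2 / 2)
      = Real.exp t₂ / (1 + Real.exp t₂) ^ 2) :
    t₁ = t₂ := by
  have hs : (0:ℝ) < Real.sqrt (2 * π) := Real.sqrt_pos.mpr (by positivity)
  set c := Real.log (Real.sqrt (2 * π)) with hc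
  have log_eq : ∀ t : ℝ,
      (Real.sqrt (2 * π))⁻¹ * Real.exp (-t ^ 2 / 2) = Real.exp t / (1 + Real.exp t) ^ 2 →
      Real.log (1 + Real.exp t) = (t + c + t ^ 2 / 2) / 2 := by
    intro t het
    have hpos : (0:ℝ) < 1 + Real.exp t := by positivity
    have := congrArg Real.log het
    rw [Real.log_mul (by positivity) (Real.exp_ne_zero _), Real.log_exp,
      Real.log_div (Real.exp_ne_zero _) (by positivity), Real.log_exp,
      Real.log_inv, Real.log_pow] at this
    push_cast at this
    linarith
  have H1 := log_eq t₁ e₁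
  have H2 := log_eq t₂ e₂
  have hH : (t₁ + 1) ^ 2 / 4 - Real.log (1 + Real.exp t₁)
      = (t₂ + 1) ^ 2 / 4 - Real.log (1 + Real.exp t₂) := by
    rw [H1, H2]; ring
  exact H_strictAnti.injOn (le_of_lt h₁) (le_of_lt h₂) hH
end

section
/- In a logistic regression model with independent Cauchy priors β_j ~ C(0, σ_j), if the predictor X_j is a solitary separator, then the posterior mean E(β_j | y) does not exist (i.e., E(|β_j| | y) = ∞). -/
open Real MeasureTheory ENNReal Set

section aux

theorem my_lintegral_pi_prod {n : ℕ} (f : Fin n → ℝ → ℝ≥0∞) (hf : ∀ i, Measurable (f i)) :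
    ∫⁻ x : Fin n → ℝ, ∏ i, f i (x i) = ∏ i, ∫⁻ t, f i t := by
  induction n with
  | zero => simp [volume_pi, MeasureTheory.lintegral_const, Measure.pi_empty_univ]
  | succ n ih =>
      have hmp := (measurePreserving_piFinSuccAbove (fun _ : Fin (n+1) => (volume : Measure ℝ)) 0)
      have hg : Measurable (fun v : Fin n → ℝ => ∏ i : Fin n, f (Fin.succ i) (v i)) := by
        apply Finset.measurable_prod
        intro i _
        exact (hf _).comp (measurable_pi_apply i)
      have hF : Measurable (fun z : ℝ × (Fin n → ℝ) =>
          f 0 z.1 * ∏ i : Fin n, f (Fin.succ i) (z.2 i)) :=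
        ((hf 0).comp measurable_fst).mul (hg.comp measurable_snd)
      have key := hmp.lintegral_comp hF
      have heq : (fun x : Fin (n+1) → ℝ => ∏ i, f i (x i)) =
          fun x => f 0 ((MeasurableEquiv.piFinSuccAbove (fun _ => ℝ) 0 x).1) *
            ∏ i : Fin n, f (Fin.succ i) ((MeasurableEquiv.piFinSuccAbove (fun _ => ℝ) 0 x).2 i) := by
        funext x
        rw [Fin.prod_univ_succ]
        rfl
      rw [volume_pi, heq, key,
        lintegral_prod_mul (f := f 0) (g := fun v : Fin n → ℝ => ∏ i : Fin n, f (Fin.succ i) (v i))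
          (hf 0).aemeasurable hg.aemeasurable, Fin.prod_univ_succ]
      congr 1
      rw [← ih (fun i => f (Fin.succ i)) (fun i => hf _), volume_pi]

theorem my_inv_lintegral_top (a : ℝ) (ha : 0 < a) :
    ∫⁻ t in Set.Ioi a, ENNReal.ofReal t⁻¹ = ∞ := by
  by_contra h
  have hint : IntegrableOn (fun t : ℝ => t⁻¹) (Set.Ioi a) := by
    refine (lintegral_ofReal_ne_top_iff_integrable
      (measurable_inv.aestronglyMeasurable) ?_).1 h
    filter_upwards [ae_restrict_mem measurableSet_Ioi] with t ht
    exact le_of_lt (inv_pos.2 (lt_trans ha ht))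
  have := (integrableOn_Ioi_rpow_iff ha).1 (hint.congr_fun
    (fun t _ => (Real.rpow_neg_one t).symm) measurableSet_Ioi)
  linarith

theorem my_ratio_le (σ c t : ℝ) (hσ : 0 < σ) (hc : 0 < c) (ht : σ < t) :
    c * σ / (2 * π) * t⁻¹ ≤ c * (|t| * (π * σ * (1 + t ^ 2 / σ ^ 2))⁻¹) := by
  have hπ := Real.pi_pos
  have ht0 : 0 < t := lt_trans hσ ht
  rw [abs_of_pos ht0]
  have hσ' : σ ≠ 0 := ne_of_gt hσ
  have hπ' : π ≠ 0 := ne_of_gt hπ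
  have ht' : t ≠ 0 := ne_of_gt ht0
  have hst : σ ^ 2 + t ^ 2 ≠ 0 := by positivity
  have hid : c * (t * (π * σ * (1 + t ^ 2 / σ ^ 2))⁻¹) - c * σ / (2 * π) * t⁻¹
      = c * σ * (t ^ 2 - σ ^ 2) / (2 * π * t * (σ ^ 2 + t ^ 2)) := by
    rw [show π * σ * (1 + t ^ 2 / σ ^ 2) = π * (σ ^ 2 + t ^ 2) / σ by field_simp]
    field_simp
    ring
  have hpos : 0 ≤ c * σ * (t ^ 2 - σ ^ 2) / (2 * π * t * (σ ^ 2 + t ^ 2)) := by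
    have h1 : 0 ≤ t ^ 2 - σ ^ 2 := by nlinarith
    positivity
  linarith

theorem my_coord_lintegral_top (σ c s : ℝ) (hσ : 0 < σ) (hc : 0 < c) (hs : s ≠ 0) :
    ∫⁻ t : ℝ, ENNReal.ofReal ({t : ℝ | 0 ≤ s * t}.indicator
      (fun t => c * (|t| * (π * σ * (1 + t ^ 2 / σ ^ 2))⁻¹)) t) = ∞ := by
  have hπ := Real.pi_pos
  set val : ℝ → ℝ := fun t => c * (|t| * (π * σ * (1 + t ^ 2 / σ ^ 2))⁻¹) with hval_def
  have hval_nonneg : ∀ t, 0 ≤ val t := by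
    intro t
    have hD : 0 < π * σ * (1 + t ^ 2 / σ ^ 2) := by positivity
    have : 0 ≤ |t| := abs_nonneg t
    positivity
  set G : ℝ → ℝ≥0∞ := fun t => ENNReal.ofReal ({t : ℝ | 0 ≤ s * t}.indicator val t)
    with hG_def
  have hSmeas : MeasurableSet {t : ℝ | 0 ≤ s * t} :=
    measurableSet_le measurable_const (measurable_id.const_mul s)
  have hval_meas : Measurable val := by fun_prop
  have hG_meas : Measurable G :=
    ENNReal.measurable_ofReal.comp (hval_meas.indicator hSmeas)
  have hfull : ∫⁻ t : ℝ, ENNReal.ofReal (val t) = ∞ := by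
    have hk : (0:ℝ) < c * σ / (2 * π) := by positivity
    have h1 : ∫⁻ t in Set.Ioi σ, ENNReal.ofReal (c * σ / (2 * π) * t⁻¹)
        ≤ ∫⁻ t in Set.Ioi σ, ENNReal.ofReal (val t) := by
      apply lintegral_mono_ae
      filter_upwards [ae_restrict_mem measurableSet_Ioi] with t ht
      exact ENNReal.ofReal_le_ofReal (my_ratio_le σ c t hσ hc ht)
    have h2 : ∫⁻ t in Set.Ioi σ, ENNReal.ofReal (c * σ / (2 * π) * t⁻¹) = ∞ := by
      have hmul : ∀ t : ℝ, ENNReal.ofReal (c * σ / (2 * π) * t⁻¹)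
          = ENNReal.ofReal (c * σ / (2 * π)) * ENNReal.ofReal t⁻¹ := fun t =>
        ENNReal.ofReal_mul (le_of_lt hk)
      simp_rw [hmul]
      rw [lintegral_const_mul _ (by fun_prop : Measurable fun t : ℝ => ENNReal.ofReal t⁻¹),
        my_inv_lintegral_top σ hσ, ENNReal.mul_top]
      positivity
    refine top_le_iff.1 ?_
    calc (⊤ : ℝ≥0∞) = ∫⁻ t in Set.Ioi σ, ENNReal.ofReal (c * σ / (2 * π) * t⁻¹) := h2.symm
      _ ≤ ∫⁻ t in Set.Ioi σ, ENNReal.ofReal (val t) := h1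
      _ ≤ ∫⁻ t : ℝ, ENNReal.ofReal (val t) := setLIntegral_le_lintegral _ _
  have hdom : ∀ t : ℝ, ENNReal.ofReal (val t) ≤ G t + G (-t) := by
    intro t
    rcases le_or_gt 0 (s * t) with h | h
    · have : G t = ENNReal.ofReal (val t) := by
        rw [hG_def]
        simp only [Set.indicator_of_mem (show t ∈ {t : ℝ | 0 ≤ s * t} from h)]
      rw [this]
      exact le_self_add
    · have hmem : (-t) ∈ {t : ℝ | 0 ≤ s * t} := by
        simp only [Set.mem_setOf_eq, mul_neg]
        linarith
      have hev : val (-t) = val t := by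
        simp [hval_def, abs_neg, neg_pow]
      have : G (-t) = ENNReal.ofReal (val t) := by
        rw [hG_def]
        simp only [Set.indicator_of_mem hmem, hev]
      rw [this]
      exact le_add_self
  have hneg : ∫⁻ t : ℝ, G (-t) = ∫⁻ t : ℝ, G t :=
    (Measure.measurePreserving_neg (volume : Measure ℝ)).lintegral_comp hG_meas
  by_contra hGne
  have hlt : ∫⁻ t : ℝ, G t < ∞ := lt_top_iff_ne_top.2 hGne
  have : ∫⁻ t : ℝ, ENNReal.ofReal (val t) ≤ (∫⁻ t : ℝ, G t) + ∫⁻ t : ℝ, G t := by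
    calc ∫⁻ t : ℝ, ENNReal.ofReal (val t) ≤ ∫⁻ t : ℝ, (G t + G (-t)) :=
          lintegral_mono hdom
      _ = (∫⁻ t : ℝ, G t) + ∫⁻ t : ℝ, G (-t) :=
          lintegral_add_left hG_meas _
      _ = (∫⁻ t : ℝ, G t) + ∫⁻ t : ℝ, G t := by rw [hneg]
  rw [hfull] at this
  exact absurd (lt_of_le_of_lt this (ENNReal.add_lt_top.2 ⟨hlt, hlt⟩)) (lt_irrefl _)

end aux

set_option maxHeartbeats 2000000 in
/-- In logistic regression with independent Cauchy priors `β_j ~ C(0, σ_j)`, if the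
predictor `X_j` is a solitary separator (some `α` supported only on coordinate `j`
achieves complete or quasicomplete separation), then the posterior mean `E(β_j | y)`
does not exist: `|β_j|` times the unnormalized posterior density (likelihood times prior)
is not integrable over `ℝ^p`. -/
theorem solitary_separator_posterior_mean_not_exists (n p : ℕ)
    (X : Fin n → Fin p → ℝ) (y : Fin n → Bool)
    (σ : Fin p → ℝ) (hσ : ∀ k, 0 < σ k) (j : Fin p)
    (hsol : ∃ s : ℝ, s ≠ 0 ∧ ∀ i,
      (y i = true → 0 ≤ s * X i j) ∧ (y i = false → s * X i j ≤ 0)) :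
    ¬ Integrable (fun β : Fin p → ℝ =>
      |β j| *
      ((∏ i, if y i then Real.exp (∑ k, X i k * β k) / (1 + Real.exp (∑ k, X i k * β k))
             else 1 / (1 + Real.exp (∑ k, X i k * β k))) *
       ∏ k, (π * σ k * (1 + (β k) ^ 2 / (σ k) ^ 2))⁻¹)) := by
  obtain ⟨s, hs, hsep⟩ := hsol
  have hπ := Real.pi_pos
  intro hint
  set f : (Fin p → ℝ) → ℝ := fun β =>
      |β j| *
      ((∏ i, if y i then Real.exp (∑ k, X i k * β k) / (1 + Real.exp (∑ k, X i k * β k))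
             else 1 / (1 + Real.exp (∑ k, X i k * β k))) *
       ∏ k, (π * σ k * (1 + (β k) ^ 2 / (σ k) ^ 2))⁻¹) with hf_def
  -- constants
  set M : ℝ := ∑ i, ∑ k, |X i k| with hM_def
  have hM0 : 0 ≤ M := Finset.sum_nonneg fun i _ => Finset.sum_nonneg fun k _ => abs_nonneg _
  set c0 : ℝ := (1 + Real.exp M)⁻¹ with hc0_def
  have hc0 : 0 < c0 := by positivity
  set d : Fin p → ℝ := fun k => (π * σ k * (1 + 1 / (σ k) ^ 2))⁻¹ with hd_def
  have hd_pos : ∀ k, 0 < d k := by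
    intro k
    have := hσ k
    positivity
  set D : ℝ := ∏ k ∈ Finset.univ.erase j, d k with hD_def
  have hD_pos : 0 < D := Finset.prod_pos fun k _ => hd_pos k
  set C : ℝ := c0 ^ n * D with hC_def
  have hC : 0 < C := mul_pos (pow_pos hc0 n) hD_pos
  -- the coordinate lower-bound functions
  set h : Fin p → ℝ → ℝ := fun k t =>
    if k = j then
      {t : ℝ | 0 ≤ s * t}.indicator
        (fun t => C * (|t| * (π * σ j * (1 + t ^ 2 / (σ j) ^ 2))⁻¹)) t
    else (Set.Icc (0:ℝ) 1).indicator 1 t with hh_def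
  have hh_nonneg : ∀ k t, 0 ≤ h k t := by
    intro k t
    rw [hh_def]
    by_cases hk : k = j
    · simp only [hk, if_true]
      apply Set.indicator_nonneg
      intro t _
      have hσj := hσ j
      have hD2 : 0 < π * σ j * (1 + t ^ 2 / (σ j) ^ 2) := by positivity
      have : 0 ≤ |t| := abs_nonneg t
      positivity
    · simp only [hk, if_false]
      apply Set.indicator_nonneg
      intro t _
      norm_num
  have hh_meas : ∀ k, Measurable (h k) := by
    intro k
    rw [hh_def]
    by_cases hk : k = j
    · simp only [hk, if_true]
      apply Measurable.indicator
      · fun_prop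
      · exact measurableSet_le measurable_const (measurable_id.const_mul s)
    · simp only [hk, if_false]
      exact measurable_const.indicator measurableSet_Icc
  set G : Fin p → ℝ → ℝ≥0∞ := fun k t => ENNReal.ofReal (h k t) with hG_def
  have hG_meas : ∀ k, Measurable (G k) := fun k =>
    ENNReal.measurable_ofReal.comp (hh_meas k)
  -- nonnegativity of f
  have hf_nonneg : ∀ β, 0 ≤ f β := by
    intro β
    rw [hf_def]
    apply mul_nonneg (abs_nonneg _)
    apply mul_nonneg
    · apply Finset.prod_nonneg
      intro i _
      by_cases hy : y i
      · simp only [hy, if_true]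
        have := Real.exp_pos (∑ k, X i k * β k)
        positivity
      · simp only [hy, if_false]
        have := Real.exp_pos (∑ k, X i k * β k)
        positivity
    · apply Finset.prod_nonneg
      intro k _
      have := hσ k
      have : 0 < π * σ k * (1 + (β k) ^ 2 / (σ k) ^ 2) := by positivity
      positivity
  -- pointwise domination
  have hdom : ∀ β : Fin p → ℝ, (∏ k, G k (β k)) ≤ ENNReal.ofReal (f β) := by
    intro β
    by_cases hcj : 0 ≤ s * β j
    · by_cases hck : ∀ k, k ≠ j → β k ∈ Set.Icc (0:ℝ) 1
      · -- main case
        have hprod : (∏ k, G k (β k)) = ENNReal.ofReal (∏ k, h k (β k)) :=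
          (ENNReal.ofReal_prod_of_nonneg (fun k _ => hh_nonneg k (β k))).symm
        rw [hprod]
        apply ENNReal.ofReal_le_ofReal
        -- compute the product of h's
        have hsplit : (∏ k, h k (β k)) =
            h j (β j) * ∏ k ∈ Finset.univ.erase j, h k (β k) :=
          (Finset.mul_prod_erase Finset.univ _ (Finset.mem_univ j)).symm
        have herase1 : (∏ k ∈ Finset.univ.erase j, h k (β k)) = 1 := by
          apply Finset.prod_eq_one
          intro k hk
          have hkj : k ≠ j := Finset.ne_of_mem_erase hk
          rw [hh_def]
          simp only [hkj, if_false]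
          rw [Set.indicator_of_mem (hck k hkj)]
          rfl
        have hjval : h j (β j) =
            C * (|β j| * (π * σ j * (1 + (β j) ^ 2 / (σ j) ^ 2))⁻¹) := by
          have hm : β j ∈ {t : ℝ | 0 ≤ s * t} := hcj
          rw [hh_def]
          simp only [if_pos rfl]
          rw [Set.indicator_of_mem hm]
          simp
        rw [hsplit, herase1, mul_one, hjval]
        -- now the real inequality
        rw [hf_def]
        -- likelihood lower bound
        have hL : c0 ^ n ≤ ∏ i, (if y i then
              Real.exp (∑ k, X i k * β k) / (1 + Real.exp (∑ k, X i k * β k))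
            else 1 / (1 + Real.exp (∑ k, X i k * β k))) := by
          have : c0 ^ n = ∏ _i : Fin n, c0 := by simp
          rw [this]
          apply Finset.prod_le_prod (fun i _ => le_of_lt hc0)
          intro i _
          set t : ℝ := ∑ k, X i k * β k with ht_def
          have hr_bound : |∑ k ∈ Finset.univ.erase j, X i k * β k| ≤ M := by
            calc |∑ k ∈ Finset.univ.erase j, X i k * β k|
                ≤ ∑ k ∈ Finset.univ.erase j, |X i k * β k| :=
                  Finset.abs_sum_le_sum_abs _ _
              _ ≤ ∑ k ∈ Finset.univ.erase j, |X i k| := by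
                  apply Finset.sum_le_sum
                  intro k hk
                  rw [abs_mul]
                  have hbk := hck k (Finset.ne_of_mem_erase hk)
                  rw [Set.mem_Icc] at hbk
                  have : |β k| ≤ 1 := abs_le.2 ⟨by linarith [hbk.1], hbk.2⟩
                  calc |X i k| * |β k| ≤ |X i k| * 1 :=
                        mul_le_mul_of_nonneg_left this (abs_nonneg _)
                    _ = |X i k| := mul_one _
              _ ≤ ∑ k, |X i k| :=
                  Finset.sum_le_sum_of_subset_of_nonneg (Finset.erase_subset _ _)
                    (fun k _ _ => abs_nonneg _)
              _ ≤ M := by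
                  rw [hM_def]
                  exact Finset.single_le_sum (f := fun i => ∑ k, |X i k|)
                    (fun i _ => Finset.sum_nonneg fun k _ => abs_nonneg _)
                    (Finset.mem_univ i)
          have ht_eq : t = X i j * β j + ∑ k ∈ Finset.univ.erase j, X i k * β k := by
            rw [ht_def]
            exact (Finset.add_sum_erase Finset.univ _ (Finset.mem_univ j)).symm
          have hexpt := Real.exp_pos t
          have hexpM := Real.exp_pos M
          by_cases hy : y i
          · simp only [hy, if_true]
            have hXj : 0 ≤ X i j * β j := by
              have h1 := (hsep i).1 hy
              have h2 : X i j * β j = (s * X i j) * (s * β j) / s ^ 2 := by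
                field_simp
              rw [h2]
              exact div_nonneg (mul_nonneg h1 hcj) (sq_nonneg s)
            have htM : -M ≤ t := by
              have := abs_le.1 hr_bound
              rw [ht_eq]
              linarith [this.1]
            rw [hc0_def, inv_eq_one_div, div_le_div_iff₀ (by positivity) (by positivity)]
            have h3 : (1:ℝ) ≤ Real.exp t * Real.exp M := by
              rw [← Real.exp_add]
              exact Real.one_le_exp (by linarith)
            nlinarith
          · simp only [hy, if_false]
            have hXj : X i j * β j ≤ 0 := by
              have h1 := (hsep i).2 (by simpa using hy)
              have h2 : X i j * β j = (s * X i j) * (s * β j) / s ^ 2 := by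
                field_simp
              rw [h2]
              exact div_nonpos_of_nonpos_of_nonneg (mul_nonpos_of_nonpos_of_nonneg h1 hcj)
                (sq_nonneg s)
            have htM : t ≤ M := by
              have := abs_le.1 hr_bound
              rw [ht_eq]
              linarith [this.2]
            rw [hc0_def, inv_eq_one_div]
            apply one_div_le_one_div_of_le (by positivity)
            have : Real.exp t ≤ Real.exp M := Real.exp_le_exp.2 htM
            linarith
        -- prior lower bound
        have hP : (π * σ j * (1 + (β j) ^ 2 / (σ j) ^ 2))⁻¹ * D ≤
            ∏ k, (π * σ k * (1 + (β k) ^ 2 / (σ k) ^ 2))⁻¹ := by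
          rw [← Finset.mul_prod_erase Finset.univ
            (fun k => (π * σ k * (1 + (β k) ^ 2 / (σ k) ^ 2))⁻¹) (Finset.mem_univ j)]
          apply mul_le_mul_of_nonneg_left ?_ (by
            have := hσ j
            positivity)
          rw [hD_def]
          apply Finset.prod_le_prod (fun k _ => le_of_lt (hd_pos k))
          intro k hk
          rw [hd_def]
          have hσk := hσ k
          apply inv_anti₀ (by positivity)
          have hbk := hck k (Finset.ne_of_mem_erase hk)
          rw [Set.mem_Icc] at hbk
          have : (β k) ^ 2 ≤ 1 := by nlinarith [hbk.1, hbk.2]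
          have h4 : (β k) ^ 2 / (σ k) ^ 2 ≤ 1 / (σ k) ^ 2 := by
            apply div_le_div_of_nonneg_right this ?_ |>.trans_eq rfl
            positivity
          have h5 : 1 + (β k) ^ 2 / (σ k) ^ 2 ≤ 1 + 1 / (σ k) ^ 2 := by linarith
          exact mul_le_mul_of_nonneg_left h5 (by positivity)
        -- combine
        have hdensj : 0 ≤ (π * σ j * (1 + (β j) ^ 2 / (σ j) ^ 2))⁻¹ := by
          have := hσ j
          positivity
        calc C * (|β j| * (π * σ j * (1 + (β j) ^ 2 / (σ j) ^ 2))⁻¹)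
            = |β j| * (c0 ^ n * ((π * σ j * (1 + (β j) ^ 2 / (σ j) ^ 2))⁻¹ * D)) := by
              rw [hC_def]; ring
          _ ≤ |β j| * ((∏ i, (if y i then
                Real.exp (∑ k, X i k * β k) / (1 + Real.exp (∑ k, X i k * β k))
              else 1 / (1 + Real.exp (∑ k, X i k * β k)))) *
              ∏ k, (π * σ k * (1 + (β k) ^ 2 / (σ k) ^ 2))⁻¹) := by
              apply mul_le_mul_of_nonneg_left ?_ (abs_nonneg _)
              exact mul_le_mul hL hP (mul_nonneg hdensj (le_of_lt hD_pos))
                (le_trans (le_of_lt (pow_pos hc0 n)) hL)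
      · -- some coordinate out of the box: left side is zero
        push_neg at hck
        obtain ⟨k, hkj, hk⟩ := hck
        have : G k (β k) = 0 := by
          rw [hG_def, hh_def]
          simp only [hkj, if_false]
          rw [Set.indicator_of_notMem hk]
          simp
        calc (∏ k, G k (β k)) = 0 :=
              Finset.prod_eq_zero (Finset.mem_univ k) this
          _ ≤ ENNReal.ofReal (f β) := zero_le
    · -- wrong sign on coordinate j: left side is zero
      have : G j (β j) = 0 := by
        have hnm : β j ∉ {t : ℝ | 0 ≤ s * t} := hcj
        rw [hG_def, hh_def]
        simp only [if_pos rfl]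
        rw [Set.indicator_of_notMem hnm]
        simp
      calc (∏ k, G k (β k)) = 0 :=
            Finset.prod_eq_zero (Finset.mem_univ j) this
        _ ≤ ENNReal.ofReal (f β) := zero_le
  -- the product integral is infinite
  have hGj_top : ∫⁻ t : ℝ, G j t = ∞ := by
    rw [hG_def]
    have : h j = {t : ℝ | 0 ≤ s * t}.indicator
        (fun t => C * (|t| * (π * σ j * (1 + t ^ 2 / (σ j) ^ 2))⁻¹)) := by
      rw [hh_def]
      simp
    simp only [this]
    exact my_coord_lintegral_top (σ j) C s (hσ j) hC hs
  have hGk_one : ∀ k, k ≠ j → ∫⁻ t : ℝ, G k t = 1 := by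
    intro k hkj
    rw [hG_def]
    have : (fun t : ℝ => ENNReal.ofReal (h k t)) =
        fun t => (Set.Icc (0:ℝ) 1).indicator (fun _ => (1:ℝ≥0∞)) t := by
      funext t
      rw [hh_def]
      simp only [hkj, if_false]
      by_cases ht : t ∈ Set.Icc (0:ℝ) 1
      · rw [Set.indicator_of_mem ht, Set.indicator_of_mem ht]
        simp [Pi.one_apply]
      · rw [Set.indicator_of_notMem ht, Set.indicator_of_notMem ht]
        simp
    simp only [this]
    rw [lintegral_indicator measurableSet_Icc]
    simp [Real.volume_Icc]
  have hprod_top : (∏ k, ∫⁻ t : ℝ, G k t) = ∞ := by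
    rw [← Finset.mul_prod_erase Finset.univ (fun k => ∫⁻ t : ℝ, G k t) (Finset.mem_univ j),
      hGj_top]
    have : (∏ k ∈ Finset.univ.erase j, ∫⁻ t : ℝ, G k t) = 1 := by
      apply Finset.prod_eq_one
      intro k hk
      exact hGk_one k (Finset.ne_of_mem_erase hk)
    rw [this, mul_one]
  -- contradiction with integrability
  have hfin : ∫⁻ β : Fin p → ℝ, ENNReal.ofReal (f β) < ∞ :=
    (hasFiniteIntegral_iff_ofReal (Filter.Eventually.of_forall hf_nonneg)).1 hint.2
  have hge : ∫⁻ β : Fin p → ℝ, ENNReal.ofReal (f β) = ∞ := by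
    refine top_le_iff.1 ?_
    calc (⊤ : ℝ≥0∞) = ∏ k, ∫⁻ t : ℝ, G k t := hprod_top.symm
      _ = ∫⁻ β : Fin p → ℝ, ∏ k, G k (β k) := (my_lintegral_pi_prod G hG_meas).symm
      _ ≤ ∫⁻ β : Fin p → ℝ, ENNReal.ofReal (f β) := lintegral_mono hdom
  rw [hge] at hfin
  exact absurd hfin (lt_irrefl _)
end

section
/- In a logistic regression model with independent Cauchy priors β_j ~ C(0, σ_j), if the predictor X_j is not a solitary separator (and the design matrix has column rank greater than 1 with first column all ones), then the posterior mean E(β_j | y) exists. -/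
open Real MeasureTheory

lemma aux_one_add_sum_le_prod {ι : Type*} (s : Finset ι) (f : ι → ℝ)
    (hf : ∀ i ∈ s, 0 ≤ f i) : 1 + ∑ i ∈ s, f i ≤ ∏ i ∈ s, (1 + f i) := by
  classical
  induction s using Finset.cons_induction with
  | empty => simp
  | cons a s ha ih =>
    rw [Finset.sum_cons, Finset.prod_cons]
    have h0 : 0 ≤ f a := hf a (Finset.mem_cons_self a s)
    have hs : ∀ i ∈ s, 0 ≤ f i := fun i hi => hf i (Finset.mem_cons_of_mem hi)
    have h1 := ih hs
    have hsum : 0 ≤ ∑ i ∈ s, f i := Finset.sum_nonneg hs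
    nlinarith

lemma aux_cauchy (s t : ℝ) (hs : 0 < s) :
    (π * s * (1 + t ^ 2 / s ^ 2))⁻¹ * (1 + |t|) ^ 2 ≤ s + s⁻¹ := by
  have hd : 0 < π * s * (1 + t ^ 2 / s ^ 2) := by positivity
  rw [inv_mul_le_iff₀ hd]
  have e : π * s * (1 + t ^ 2 / s ^ 2) * (s + s⁻¹) = π * (s ^ 2 + 1 + t ^ 2 + (t / s) ^ 2) := by
    field_simp
    ring
  rw [e]
  nlinarith [pi_gt_three, sq_nonneg (1 - |t|), sq_abs t, sq_nonneg (t / s), sq_nonneg s, abs_nonneg t]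

lemma aux_g_sq (t : ℝ) : ((1 + |t|) ^ (-(3/2 : ℝ))) ^ 2 = ((1 + |t|) ^ 3)⁻¹ := by
  have h : (0:ℝ) < 1 + |t| := by positivity
  rw [← Real.rpow_natCast ((1 + |t|) ^ (-(3/2 : ℝ))) 2, ← Real.rpow_mul h.le,
    show (-(3/2 : ℝ)) * (2:ℕ) = -3 by norm_num, Real.rpow_neg h.le,
    show (3:ℝ) = ((3:ℕ):ℝ) by norm_num, Real.rpow_natCast]

set_option maxHeartbeats 2000000 in
/-- In logistic regression with independent Cauchy priors `β_j ~ C(0, σ_j)`, where the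
design matrix has column rank greater than `1` and its first column is all ones, if the
predictor `X_j` is not a solitary separator then the posterior mean `E(β_j | y)` exists:
`|β_j|` times the unnormalized posterior density is integrable over `ℝ^p`. -/
theorem not_solitary_separator_posterior_mean_exists (n p : ℕ) (hp : 0 < p)
    (X : Fin n → Fin p → ℝ) (y : Fin n → Bool)
    (hones : ∀ i, X i ⟨0, hp⟩ = 1)
    (hrank : 1 < (Matrix.of X).rank)
    (σ : Fin p → ℝ) (hσ : ∀ k, 0 < σ k) (j : Fin p)
    (hsol : ¬ ∃ s : ℝ, s ≠ 0 ∧ ∀ i,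
      (y i = true → 0 ≤ s * X i j) ∧ (y i = false → s * X i j ≤ 0)) :
    Integrable (fun β : Fin p → ℝ =>
      |β j| *
      ((∏ i, if y i then Real.exp (∑ k, X i k * β k) / (1 + Real.exp (∑ k, X i k * β k))
             else 1 / (1 + Real.exp (∑ k, X i k * β k))) *
       ∏ k, (π * σ k * (1 + (β k) ^ 2 / (σ k) ^ 2))⁻¹)) := by
  classical
  -- separator witnesses
  have key : ∀ s : ℝ, s ≠ 0 → ∃ i, (y i = true ∧ s * X i j < 0) ∨ (y i = false ∧ 0 < s * X i j) := by
    intro s hs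
    by_contra h
    push_neg at h
    exact hsol ⟨s, hs, h⟩
  obtain ⟨i₁, h₁⟩ := key 1 one_ne_zero
  obtain ⟨i₂, h₂⟩ := key (-1) (by norm_num)
  simp only [one_mul] at h₁
  simp only [neg_mul, one_mul, neg_lt_zero, neg_pos] at h₂
  -- basic constants
  set M : ℝ := 1 + ∑ i, ∑ k, |X i k| with hMdef
  have hMpos : 0 < M := by
    have : (0:ℝ) ≤ ∑ i, ∑ k, |X i k| :=
      Finset.sum_nonneg fun i _ => Finset.sum_nonneg fun k _ => abs_nonneg _
    simp only [hMdef]; linarith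
  have hMb : ∀ i k, |X i k| ≤ M := by
    intro i k
    have h1 : |X i k| ≤ ∑ k', |X i k'| :=
      Finset.single_le_sum (f := fun k' => |X i k'|) (fun k' _ => abs_nonneg _) (Finset.mem_univ k)
    have h2 : (∑ k', |X i k'|) ≤ ∑ i', ∑ k', |X i' k'| :=
      Finset.single_le_sum (f := fun i' => ∑ k', |X i' k'|)
        (fun i' _ => Finset.sum_nonneg fun k' _ => abs_nonneg _) (Finset.mem_univ i)
    simp only [hMdef]; linarith
  set c : ℝ := min |X i₁ j| |X i₂ j| with hcdef
  have hc : 0 < c := by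
    have hx1 : X i₁ j ≠ 0 := by rcases h₁ with ⟨_, h⟩ | ⟨_, h⟩ <;> [exact ne_of_lt h; exact ne_of_gt h]
    have hx2 : X i₂ j ≠ 0 := by rcases h₂ with ⟨_, h⟩ | ⟨_, h⟩ <;> [exact ne_of_gt h; exact ne_of_lt h]
    exact lt_min (abs_pos.mpr hx1) (abs_pos.mpr hx2)
  -- notations
  set S : (Fin p → ℝ) → ℝ := fun β => ∑ k ∈ Finset.univ.erase j, |β k| with hSdef
  have hS0 : ∀ β, 0 ≤ S β := fun β => Finset.sum_nonneg fun k _ => abs_nonneg _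
  set ℓ : Fin n → (Fin p → ℝ) → ℝ := fun i β =>
    if y i then Real.exp (∑ k, X i k * β k) / (1 + Real.exp (∑ k, X i k * β k))
    else 1 / (1 + Real.exp (∑ k, X i k * β k)) with hℓdef
  set L : (Fin p → ℝ) → ℝ := fun β => ∏ i, ℓ i β with hLdef
  have hden : ∀ (t : ℝ), 0 < 1 + Real.exp t := fun t => by positivity
  have hℓpos : ∀ i β, 0 < ℓ i β := by
    intro i β
    simp only [hℓdef]
    split <;> positivity
  have hℓ1 : ∀ i β, ℓ i β ≤ 1 := by
    intro i β
    simp only [hℓdef]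
    split
    · exact div_le_one_of_le₀ (by linarith [hden (∑ k, X i k * β k)]) (hden _).le
    · rw [div_le_one (hden _)]; linarith [Real.exp_pos (∑ k, X i k * β k)]
  have hL0 : ∀ β, 0 ≤ L β := fun β => Finset.prod_nonneg fun i _ => (hℓpos i β).le
  have hL1 : ∀ β, L β ≤ 1 := fun β =>
    Finset.prod_le_one (fun i _ => (hℓpos i β).le) (fun i _ => hℓ1 i β)
  have hL_le : ∀ i β, L β ≤ ℓ i β := by
    intro i β
    have := Finset.mul_prod_erase Finset.univ (fun i' => ℓ i' β) (Finset.mem_univ i)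
    calc L β = ℓ i β * ∏ i' ∈ Finset.univ.erase i, ℓ i' β := this.symm
      _ ≤ ℓ i β * 1 := by
          refine mul_le_mul_of_nonneg_left ?_ (hℓpos i β).le
          exact Finset.prod_le_one (fun i' _ => (hℓpos i' β).le) (fun i' _ => hℓ1 i' β)
      _ = ℓ i β := mul_one _
  -- bound on the non-j part of the linear predictor
  have hrest : ∀ i β, |∑ k ∈ Finset.univ.erase j, X i k * β k| ≤ M * S β := by
    intro i β
    calc |∑ k ∈ Finset.univ.erase j, X i k * β k|
        ≤ ∑ k ∈ Finset.univ.erase j, |X i k * β k| := Finset.abs_sum_le_sum_abs _ _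
      _ ≤ ∑ k ∈ Finset.univ.erase j, M * |β k| := by
          refine Finset.sum_le_sum fun k _ => ?_
          rw [abs_mul]
          exact mul_le_mul_of_nonneg_right (hMb i k) (abs_nonneg _)
      _ = M * S β := by rw [hSdef, Finset.mul_sum]
  have hdec : ∀ (i : Fin n) (β : Fin p → ℝ), ∑ k, X i k * β k = X i j * β j + ∑ k ∈ Finset.univ.erase j, X i k * β k :=
    fun (i : Fin n) (β : Fin p → ℝ) => (Finset.add_sum_erase Finset.univ (fun k => X i k * β k) (Finset.mem_univ j)).symm
  -- ℓ ≤ exp(t) resp. exp(-t)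
  have hexpT : ∀ i β, y i = true → ℓ i β ≤ Real.exp (∑ k, X i k * β k) := by
    intro i β hy
    simp only [hℓdef, hy, if_true]
    exact div_le_self (Real.exp_pos _).le (by linarith [Real.exp_pos (∑ k, X i k * β k)])
  have hexpF : ∀ i β, y i = false → ℓ i β ≤ Real.exp (-(∑ k, X i k * β k)) := by
    intro i β hy
    simp only [hℓdef, hy, if_false]
    rw [Real.exp_neg, ← one_div]
    exact one_div_le_one_div_of_le (Real.exp_pos _) (by linarith [Real.exp_pos (∑ k, X i k * β k)])
  -- the key exponential bound
  have hLexp : ∀ β, L β ≤ Real.exp (M * S β - c * |β j|) := by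
    intro β
    rcases le_or_gt 0 (β j) with hbj | hbj
    · rw [abs_of_nonneg hbj]
      rcases h₁ with ⟨hy, ha⟩ | ⟨hy, ha⟩
      · refine (hL_le i₁ β).trans ((hexpT i₁ β hy).trans (Real.exp_le_exp.mpr ?_))
        rw [hdec i₁ β]
        have h5 := (abs_le.mp (hrest i₁ β)).2
        have hcle : c ≤ -X i₁ j := by
          have : c ≤ |X i₁ j| := min_le_left _ _
          rwa [abs_of_neg ha] at this
        nlinarith
      · refine (hL_le i₁ β).trans ((hexpF i₁ β hy).trans (Real.exp_le_exp.mpr ?_))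
        rw [hdec i₁ β]
        have h5 := (abs_le.mp (hrest i₁ β)).1
        have hcle : c ≤ X i₁ j := by
          have : c ≤ |X i₁ j| := min_le_left _ _
          rwa [abs_of_pos ha] at this
        nlinarith
    · rw [abs_of_neg hbj]
      rcases h₂ with ⟨hy, ha⟩ | ⟨hy, ha⟩
      · refine (hL_le i₂ β).trans ((hexpT i₂ β hy).trans (Real.exp_le_exp.mpr ?_))
        rw [hdec i₂ β]
        have h5 := (abs_le.mp (hrest i₂ β)).2
        have hcle : c ≤ X i₂ j := by
          have : c ≤ |X i₂ j| := min_le_right _ _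
          rwa [abs_of_pos ha] at this
        nlinarith
      · refine (hL_le i₂ β).trans ((hexpF i₂ β hy).trans (Real.exp_le_exp.mpr ?_))
        rw [hdec i₂ β]
        have h5 := (abs_le.mp (hrest i₂ β)).1
        have hcle : c ≤ -X i₂ j := by
          have : c ≤ |X i₂ j| := min_le_right _ _
          rwa [abs_of_neg ha] at this
        nlinarith
  -- (★²) : L² (1+|βⱼ|) ≤ C₁ ∏_{k≠j} (1+|βₖ|)
  set C₁ : ℝ := 1 + c⁻¹ + 2 * M * c⁻¹ with hC₁def
  have hcinv : 0 < c⁻¹ := inv_pos.mpr hc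
  have hC₁pos : 0 < C₁ := by
    have : 0 < 2 * M * c⁻¹ := by positivity
    simp only [hC₁def]; linarith
  have hprod1 : ∀ β : Fin p → ℝ, 1 ≤ ∏ k ∈ Finset.univ.erase j, (1 + |β k|) := by
    intro β
    calc (1:ℝ) = ∏ _k ∈ Finset.univ.erase j, (1:ℝ) := by simp
      _ ≤ ∏ k ∈ Finset.univ.erase j, (1 + |β k|) :=
          Finset.prod_le_prod (fun k _ => zero_le_one) (fun k _ => by linarith [abs_nonneg (β k)])
  have hsum_le : ∀ β : Fin p → ℝ, 1 + S β ≤ ∏ k ∈ Finset.univ.erase j, (1 + |β k|) := by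
    intro β
    exact aux_one_add_sum_le_prod _ _ fun k _ => abs_nonneg _
  have hstar : ∀ β : Fin p → ℝ,
      L β ^ 2 * (1 + |β j|) ≤ C₁ * ∏ k ∈ Finset.univ.erase j, (1 + |β k|) := by
    intro β
    rcases le_or_gt (c * |β j|) (2 * M * S β + 1) with hcase | hcase
    · have hL2 : L β ^ 2 ≤ 1 := by nlinarith [hL0 β, hL1 β]
      have h6 : 1 + |β j| ≤ C₁ * (1 + S β) := by
        have hmul : c * (1 + |β j|) ≤ c * (C₁ * (1 + S β)) := by
          have hcc : c * C₁ = c + 1 + 2 * M := by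
            simp only [hC₁def]; field_simp
          have hexpand : c * (C₁ * (1 + S β)) = (c + 1 + 2 * M) * (1 + S β) := by
            rw [← mul_assoc, hcc]
          rw [hexpand]
          nlinarith [hS0 β, mul_nonneg hc.le (hS0 β), hMpos, mul_nonneg hMpos.le (hS0 β)]
        exact le_of_mul_le_mul_left hmul hc
      calc L β ^ 2 * (1 + |β j|) ≤ 1 * (1 + |β j|) := by
            exact mul_le_mul_of_nonneg_right hL2 (by linarith [abs_nonneg (β j)])
        _ = 1 + |β j| := one_mul _
        _ ≤ C₁ * (1 + S β) := h6
        _ ≤ C₁ * ∏ k ∈ Finset.univ.erase j, (1 + |β k|) :=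
            mul_le_mul_of_nonneg_left (hsum_le β) hC₁pos.le
    · have hL2 : L β ^ 2 ≤ Real.exp (-(c * |β j|)) := by
        have h7 : L β ^ 2 ≤ Real.exp (M * S β - c * |β j|) ^ 2 := by
          have := hLexp β
          nlinarith [hL0 β, Real.exp_pos (M * S β - c * |β j|)]
        have h8 : Real.exp (M * S β - c * |β j|) ^ 2 = Real.exp (2 * (M * S β - c * |β j|)) := by
          rw [← Real.exp_nat_mul]; norm_num
        have h9 : 2 * (M * S β - c * |β j|) ≤ -(c * |β j|) := by linarith
        calc L β ^ 2 ≤ Real.exp (2 * (M * S β - c * |β j|)) := by rw [← h8]; exact h7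
          _ ≤ Real.exp (-(c * |β j|)) := Real.exp_le_exp.mpr h9
      have h10 : Real.exp (-(c * |β j|)) ≤ (1 + c * |β j|)⁻¹ := by
        rw [Real.exp_neg]
        refine inv_anti₀ (by positivity) ?_
        linarith [Real.add_one_le_exp (c * |β j|)]
      have h11 : L β ^ 2 * (1 + |β j|) ≤ (1 + c * |β j|)⁻¹ * (1 + |β j|) := by
        refine mul_le_mul_of_nonneg_right (hL2.trans h10) (by linarith [abs_nonneg (β j)])
      have h12 : (1 + c * |β j|)⁻¹ * (1 + |β j|) ≤ 1 + c⁻¹ := by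
        rw [inv_mul_le_iff₀ (by positivity)]
        have hx : c * |β j| * c⁻¹ = |β j| := by
          field_simp
        nlinarith [abs_nonneg (β j), mul_nonneg hc.le (abs_nonneg (β j)), hcinv]
      have h13 : (1:ℝ) + c⁻¹ ≤ C₁ := by
        have : 0 ≤ 2 * M * c⁻¹ := by positivity
        simp only [hC₁def]; linarith
      calc L β ^ 2 * (1 + |β j|) ≤ 1 + c⁻¹ := h11.trans h12
        _ ≤ C₁ := h13
        _ ≤ C₁ * ∏ k ∈ Finset.univ.erase j, (1 + |β k|) :=
            le_mul_of_one_le_right hC₁pos.le (hprod1 β)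
  -- Cauchy density bounds
  set d : Fin p → ℝ → ℝ := fun k t => (π * σ k * (1 + t ^ 2 / σ k ^ 2))⁻¹ with hddef
  have hdpos : ∀ k t, 0 < d k t := fun k t => by
    simp only [hddef]
    have := hσ k
    positivity
  have hdb : ∀ k t, d k t * (1 + |t|) ^ 2 ≤ σ k + (σ k)⁻¹ := fun k t => aux_cauchy (σ k) t (hσ k)
  set A : Fin p → ℝ := fun k => σ k + (σ k)⁻¹ with hAdef
  have hApos : ∀ k, 0 < A k := fun k => by
    simp only [hAdef]
    have := hσ k
    positivity
  set C₂ : ℝ := C₁ * ∏ k, A k ^ 2 with hC₂def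
  have hC₂pos : 0 < C₂ :=
    mul_pos hC₁pos (Finset.prod_pos fun k _ => pow_pos (hApos k) 2)
  set g : ℝ → ℝ := fun t => (1 + ‖t‖) ^ (-(3/2 : ℝ)) with hgdef
  have hgnn : ∀ t, 0 ≤ g t := fun t => Real.rpow_nonneg (by positivity) _
  -- squared pointwise bound
  have hsq : ∀ β : Fin p → ℝ,
      (|β j| * (L β * ∏ k, d k (β k))) ^ 2 * ∏ k, (1 + |β k|) ^ 3 ≤ C₂ := by
    intro β
    have e0 : ∏ k, (d k (β k) ^ 2 * (1 + |β k|) ^ 3)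
        = (∏ k, d k (β k)) ^ 2 * ∏ k, (1 + |β k|) ^ 3 := by
      rw [Finset.prod_mul_distrib, Finset.prod_pow]
    have e1 : (|β j| * (L β * ∏ k, d k (β k))) ^ 2 * ∏ k, (1 + |β k|) ^ 3
        = L β ^ 2 * (β j ^ 2 * ∏ k, (d k (β k) ^ 2 * (1 + |β k|) ^ 3)) := by
      rw [e0, mul_pow, mul_pow, sq_abs]
      ring
    rw [e1]
    set E : Fin p → ℝ := fun k => d k (β k) ^ 2 * (1 + |β k|) ^ 3 with hEdef
    have hEpos : ∀ k, 0 < E k := fun k => by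
      simp only [hEdef]
      have := hdpos k (β k)
      have : (0:ℝ) < 1 + |β k| := by positivity
      positivity
    have hsplit : ∏ k, E k = E j * ∏ k ∈ Finset.univ.erase j, E k :=
      (Finset.mul_prod_erase Finset.univ E (Finset.mem_univ j)).symm
    have hE4 : ∀ k, E k * (1 + |β k|) ≤ A k ^ 2 := by
      intro k
      have h := hdb k (β k)
      have ha : (0:ℝ) < 1 + |β k| := by positivity
      have hd0 : 0 ≤ d k (β k) := (hdpos _ _).le
      calc E k * (1 + |β k|)
          = (d k (β k) * (1 + |β k|) ^ 2) * (d k (β k) * (1 + |β k|) ^ 2) := by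
            simp only [hEdef]; ring
        _ ≤ A k * A k := mul_le_mul h h (by positivity) (hApos k).le
        _ = A k ^ 2 := (sq (A k)).symm
    have haj : (0:ℝ) < 1 + |β j| := by positivity
    have hEj : β j ^ 2 * E j ≤ A j ^ 2 * (1 + |β j|) := by
      have h3 : β j ^ 2 * E j * (1 + |β j|) ≤ (A j ^ 2 * (1 + |β j|)) * (1 + |β j|) := by
        have hb2 : β j ^ 2 ≤ (1 + |β j|) ^ 2 := by
          nlinarith [sq_abs (β j), abs_nonneg (β j)]
        calc β j ^ 2 * E j * (1 + |β j|) = (E j * (1 + |β j|)) * β j ^ 2 := by ring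
          _ ≤ A j ^ 2 * β j ^ 2 :=
              mul_le_mul_of_nonneg_right (hE4 j) (sq_nonneg _)
          _ ≤ A j ^ 2 * (1 + |β j|) ^ 2 :=
              mul_le_mul_of_nonneg_left hb2 (sq_nonneg _)
          _ = (A j ^ 2 * (1 + |β j|)) * (1 + |β j|) := by ring
      exact le_of_mul_le_mul_right h3 haj
    have hEk : ∀ k, E k ≤ A k ^ 2 / (1 + |β k|) := by
      intro k
      have ha : (0:ℝ) < 1 + |β k| := by positivity
      exact (le_div_iff₀ ha).mpr (hE4 k)
    set Pm : ℝ := ∏ k ∈ Finset.univ.erase j, (1 + |β k|) with hPmdef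
    have hPm : 0 < Pm := lt_of_lt_of_le one_pos (hprod1 β)
    have hprodA : 0 ≤ ∏ k ∈ Finset.univ.erase j, A k ^ 2 :=
      Finset.prod_nonneg fun k _ => sq_nonneg _
    calc L β ^ 2 * (β j ^ 2 * ∏ k, E k)
        = L β ^ 2 * ((β j ^ 2 * E j) * ∏ k ∈ Finset.univ.erase j, E k) := by
          rw [hsplit]; ring
      _ ≤ L β ^ 2 * ((A j ^ 2 * (1 + |β j|)) * ((∏ k ∈ Finset.univ.erase j, A k ^ 2) / Pm)) := by
          refine mul_le_mul_of_nonneg_left ?_ (sq_nonneg _)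
          refine mul_le_mul hEj ?_ (Finset.prod_nonneg fun k _ => (hEpos k).le) (by positivity)
          have h4 : ∏ k ∈ Finset.univ.erase j, E k
              ≤ ∏ k ∈ Finset.univ.erase j, (A k ^ 2 / (1 + |β k|)) :=
            Finset.prod_le_prod (fun k _ => (hEpos k).le) (fun k _ => hEk k)
          rwa [Finset.prod_div_distrib] at h4
      _ = (L β ^ 2 * (1 + |β j|)) * (A j ^ 2 * (∏ k ∈ Finset.univ.erase j, A k ^ 2) / Pm) := by
          ring
      _ ≤ (C₁ * Pm) * (A j ^ 2 * (∏ k ∈ Finset.univ.erase j, A k ^ 2) / Pm) := by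
          refine mul_le_mul_of_nonneg_right (hstar β) ?_
          positivity
      _ = C₁ * (A j ^ 2 * ∏ k ∈ Finset.univ.erase j, A k ^ 2) := by
          field_simp
      _ = C₂ := by
          rw [hC₂def, Finset.mul_prod_erase Finset.univ (fun k => A k ^ 2) (Finset.mem_univ j)]
  -- pointwise bound
  set C : ℝ := Real.sqrt C₂ with hCdef
  have hCnn : 0 ≤ C := Real.sqrt_nonneg _
  have hF0 : ∀ β : Fin p → ℝ, 0 ≤ |β j| * (L β * ∏ k, d k (β k)) := fun β =>
    mul_nonneg (abs_nonneg _)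
      (mul_nonneg (hL0 β) (Finset.prod_nonneg fun k _ => (hdpos k (β k)).le))
  have hpt : ∀ β : Fin p → ℝ,
      |β j| * (L β * ∏ k, d k (β k)) ≤ C * ∏ k, g (β k) := by
    intro β
    have hG0 : 0 ≤ C * ∏ k, g (β k) :=
      mul_nonneg hCnn (Finset.prod_nonneg fun k _ => hgnn _)
    have hQpos : 0 < ∏ k, (1 + |β k|) ^ 3 :=
      Finset.prod_pos fun k _ => by positivity
    have hsq2 : (|β j| * (L β * ∏ k, d k (β k))) ^ 2 ≤ (C * ∏ k, g (β k)) ^ 2 := by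
      have e2 : (C * ∏ k, g (β k)) ^ 2 = C₂ * ∏ k, ((1 + |β k|) ^ 3)⁻¹ := by
        rw [mul_pow, hCdef, Real.sq_sqrt hC₂pos.le, ← Finset.prod_pow]
        congr 1
        refine Finset.prod_congr rfl fun k _ => ?_
        simpa [hgdef, Real.norm_eq_abs] using aux_g_sq (β k)
      have h6 : (|β j| * (L β * ∏ k, d k (β k))) ^ 2 ≤ C₂ / ∏ k, (1 + |β k|) ^ 3 :=
        (le_div_iff₀ hQpos).mpr (hsq β)
      rw [div_eq_mul_inv, ← Finset.prod_inv_distrib] at h6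
      rw [e2]
      exact h6
    have h5 := Real.sqrt_le_sqrt hsq2
    rwa [Real.sqrt_sq (hF0 β), Real.sqrt_sq hG0] at h5
  -- integrability of the dominating function
  have hg_int : Integrable g := by
    have hr : ((Module.finrank ℝ ℝ : ℕ) : ℝ) < 3/2 := by
      simp [Module.finrank_self]
      norm_num
    simpa [hgdef] using integrable_one_add_norm (E := ℝ) (μ := volume) hr
  have hG_int : Integrable (fun β : Fin p → ℝ => C * ∏ k, g (β k)) :=
    (Integrable.fintype_prod (f := fun _ : Fin p => g) fun _ => hg_int).const_mul C
  -- measurability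
  have hmeas : Measurable (fun β : Fin p → ℝ => |β j| * (L β * ∏ k, d k (β k))) := by
    refine ((measurable_pi_apply j).abs).mul (Measurable.mul ?_ ?_)
    · refine Finset.measurable_prod _ fun i _ => ?_
      simp only [hℓdef]
      cases hyi : y i
      · simp only [hyi, Bool.false_eq_true, if_false]
        fun_prop
      · simp only [hyi, if_true]
        fun_prop
    · refine Finset.measurable_prod _ fun k _ => ?_
      simp only [hddef]
      fun_prop
  -- conclude
  refine hG_int.mono' hmeas.aestronglyMeasurable (ae_of_all _ fun β => ?_)
  rw [Real.norm_eq_abs, abs_of_nonneg (hF0 β)]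
  exact hpt β
end

section
/- In a binary regression model with a strictly increasing, continuous inverse link f₁ : ℝ → (0,1) (and f₀ = 1 − f₁), independent Cauchy priors on the coefficients, and a solitary separator X_j, the posterior mean E(β_j | y) does not exist. -/
open Real MeasureTheory Set

section Aux
lemma lint_inv_top (m c : ℝ) (hm : 0 < m) (hc : 0 < c) :
    ∫⁻ t in Set.Ioi m, ENNReal.ofReal (c / t) = ⊤ := by
  by_contra h
  have hmeas : AEStronglyMeasurable (fun t : ℝ => c / t) (volume.restrict (Ioi m)) := by
    refine (ContinuousOn.aestronglyMeasurable ?_ measurableSet_Ioi)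
    exact continuousOn_const.div continuousOn_id (fun t ht => ne_of_gt (hm.trans ht))
  have hpos : 0 ≤ᵐ[volume.restrict (Ioi m)] (fun t : ℝ => c / t) := by
    filter_upwards [ae_restrict_mem measurableSet_Ioi] with t ht
    exact div_nonneg hc.le (le_of_lt (hm.trans ht))
  have hint : IntegrableOn (fun t : ℝ => c / t) (Ioi m) := by
    refine ⟨hmeas, ?_⟩
    rw [hasFiniteIntegral_iff_ofReal hpos]
    exact lt_top_iff_ne_top.2 h
  have hint2 : IntegrableOn (fun t : ℝ => t ^ (-1 : ℝ)) (Ioi m) := by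
    have := hint.const_mul c⁻¹
    refine (integrable_congr ?_).1 this
    filter_upwards [ae_restrict_mem measurableSet_Ioi] with t ht
    have ht0 : (0:ℝ) < t := hm.trans ht
    rw [Real.rpow_neg_one]
    field_simp
  rw [integrableOn_Ioi_rpow_iff hm] at hint2
  linarith

lemma lint_gj (s σj ε : ℝ) (hs : s ≠ 0) (hσ : 0 < σj) (hε : 0 < ε) :
    ∫⁻ t, ({t : ℝ | 0 ≤ s * t}.indicator
      (fun t => ENNReal.ofReal (ε * |t| * (π * σj * (1 + t^2/σj^2))⁻¹))) t = ⊤ := by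
  set c := ε * σj / (2 * π) with hcdef
  have hπ := Real.pi_pos
  have hc : 0 < c := by positivity
  have key : ∀ t : ℝ, σj ≤ |t| → ENNReal.ofReal (c / |t|) ≤
      ENNReal.ofReal (ε * |t| * (π * σj * (1 + t^2/σj^2))⁻¹) := by
    intro t ht
    apply ENNReal.ofReal_le_ofReal
    have ht0 : 0 < |t| := lt_of_lt_of_le hσ ht
    have hsq : σj^2 ≤ t^2 := by
      have := pow_le_pow_left₀ hσ.le ht 2
      simpa [sq_abs] using this
    have h1 : 1 + t^2/σj^2 ≤ 2 * t^2 / σj^2 := by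
      have h11 : (1:ℝ) ≤ t^2/σj^2 := (one_le_div (by positivity)).2 hsq
      have : 2 * t^2 / σj^2 = t^2/σj^2 + t^2/σj^2 := by ring
      linarith
    have h2 : (π * σj * (2 * t^2 / σj^2))⁻¹ ≤ (π * σj * (1 + t^2/σj^2))⁻¹ := by
      apply inv_anti₀ (by positivity)
      exact mul_le_mul_of_nonneg_left h1 (by positivity)
    have haux : ∀ u : ℝ, 0 < u → c / u = ε * u * (π * σj * (2 * u^2 / σj^2))⁻¹ := by
      intro u hu
      rw [hcdef]
      field_simp
    calc c / |t| = ε * |t| * (π * σj * (2 * t^2 / σj^2))⁻¹ := by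
          rw [← sq_abs t]; exact haux |t| ht0
      _ ≤ _ := mul_le_mul_of_nonneg_left h2 (by positivity)
  rcases lt_or_gt_of_ne hs with hneg | hpos
  · have h1 : ∫⁻ t in Iio (-σj), ENNReal.ofReal (c / (-t)) = ⊤ := by
      have hmp : MeasurePreserving (fun t : ℝ => -t) volume volume :=
        Measure.measurePreserving_neg volume
      have hm2 : Measurable fun t : ℝ => ENNReal.ofReal (c / (-t)) :=
        ENNReal.measurable_ofReal.comp ((measurable_const.div measurable_neg))
      have heq := hmp.setLIntegral_comp_preimage (s := Iio (-σj)) measurableSet_Iio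
        (f := fun t : ℝ => ENNReal.ofReal (c / (-t))) hm2
      rw [← heq]
      have hpre : (fun t : ℝ => -t) ⁻¹' (Iio (-σj)) = Ioi σj := by
        ext a; simp
      rw [hpre]
      simp only [neg_neg]
      exact lint_inv_top σj c hσ hc
    refine top_le_iff.1 ?_
    rw [← h1, ← setLIntegral_univ (μ := volume) (f := _)]
    refine le_trans (setLIntegral_mono' measurableSet_Iio ?_) (lintegral_mono_set (subset_univ _))
    intro t ht
    have ht' : t < -σj := ht
    have htneg : t < 0 := lt_of_lt_of_le ht' (by linarith)
    have hmem : t ∈ {t : ℝ | 0 ≤ s * t} := le_of_lt (mul_pos_of_neg_of_neg hneg htneg)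
    rw [Set.indicator_of_mem hmem]
    have habs : |t| = -t := abs_of_neg htneg
    calc ENNReal.ofReal (c / (-t)) = ENNReal.ofReal (c / |t|) := by rw [habs]
      _ ≤ _ := key t (by rw [habs]; linarith)
  · have h1 : ∫⁻ t in Ioi σj, ENNReal.ofReal (c / t) = ⊤ := lint_inv_top σj c hσ hc
    refine top_le_iff.1 ?_
    rw [← h1, ← setLIntegral_univ (μ := volume) (f := _)]
    refine le_trans (setLIntegral_mono' measurableSet_Ioi ?_) (lintegral_mono_set (subset_univ _))
    intro t ht
    have ht' : σj < t := ht
    have hmem : t ∈ {t : ℝ | 0 ≤ s * t} := le_of_lt (mul_pos hpos (hσ.trans ht'))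
    rw [Set.indicator_of_mem hmem]
    have habs : |t| = t := abs_of_pos (hσ.trans ht')
    calc ENNReal.ofReal (c / t) = ENNReal.ofReal (c / |t|) := by rw [habs]
      _ ≤ _ := key t (by rw [habs]; linarith)

theorem lintegral_pi_prod' {nn : ℕ} (f : Fin nn → ℝ → ENNReal) (hf : ∀ i, Measurable (f i)) :
    ∫⁻ x : Fin nn → ℝ, ∏ i, f i (x i) = ∏ i, ∫⁻ t, f i t := by
  induction nn with
  | zero => simp [lintegral_const, volume_pi, Measure.pi_empty_univ]
  | succ m ih =>
      have h := ((measurePreserving_piFinSuccAbove (fun _ : Fin (m+1) => (volume : Measure ℝ)) 0).symm)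
      rw [volume_pi, ← h.lintegral_comp_emb (MeasurableEquiv.measurableEmbedding _)]
      simp_rw [MeasurableEquiv.piFinSuccAbove_symm_apply, Fin.insertNthEquiv,
        Fin.prod_univ_succ, Fin.insertNth_zero]
      simp only [Fin.zero_succAbove, Function.comp_def, Fin.cons_zero, Fin.cons_succ,
        Equiv.coe_fn_mk, cast_eq]
      have h2 := lintegral_prod_mul (μ := (volume : Measure ℝ))
        (ν := (Measure.pi fun _ : Fin m => (volume : Measure ℝ)))
        (f := f 0) (g := fun x : Fin m → ℝ => ∏ i : Fin m, f i.succ (x i))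
        (hf 0).aemeasurable
        (Finset.measurable_prod _ (fun i _ => (hf i.succ).comp (measurable_pi_apply i))).aemeasurable
      rw [h2, ← volume_pi, ih (fun i => f i.succ) (fun i => hf i.succ)]

end Aux

/-- In a binary regression model with a strictly increasing continuous inverse link
`f₁ : ℝ → (0,1)` (onto), failure probability `f₀ = 1 − f₁`, independent Cauchy priors
`β_j ~ C(0, σ_j)`, and a solitary separator `X_j`, the posterior mean `E(β_j | y)` does
not exist. -/
theorem general_link_solitary_separator_posterior_mean_not_exists (n p : ℕ)
    (X : Fin n → Fin p → ℝ) (y : Fin n → Bool)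
    (σ : Fin p → ℝ) (hσ : ∀ k, 0 < σ k) (j : Fin p)
    (f₁ : ℝ → ℝ) (hmono : StrictMono f₁) (hcont : Continuous f₁)
    (hrange : Set.range f₁ = Set.Ioo 0 1)
    (hsol : ∃ s : ℝ, s ≠ 0 ∧ ∀ i,
      (y i = true → 0 ≤ s * X i j) ∧ (y i = false → s * X i j ≤ 0)) :
    ¬ Integrable (fun β : Fin p → ℝ =>
      |β j| *
      ((∏ i, if y i then f₁ (∑ k, X i k * β k) else 1 - f₁ (∑ k, X i k * β k)) *
       ∏ k, (π * σ k * (1 + (β k) ^ 2 / (σ k) ^ 2))⁻¹)) := by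
  intro hI
  obtain ⟨s, hs, hsep⟩ := hsol
  have hπ := Real.pi_pos
  have hpr : ∀ (k : Fin p) (t : ℝ), (0:ℝ) < (π * σ k * (1 + t^2/(σ k)^2))⁻¹ := by
    intro k t
    have := hσ k
    positivity
  -- basic facts about f₁
  have h01 : ∀ t : ℝ, f₁ t ∈ Set.Ioo (0:ℝ) 1 := fun t => hrange ▸ ⟨t, rfl⟩
  -- the likelihood
  set L : (Fin p → ℝ) → ℝ := fun β =>
    ∏ i, if y i then f₁ (∑ k, X i k * β k) else 1 - f₁ (∑ k, X i k * β k) with hL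
  have hLpos : ∀ β, 0 < L β := by
    intro β
    apply Finset.prod_pos
    intro i _
    by_cases hy : y i <;> simp only [hy, if_true, if_false, Bool.false_eq_true]
    · exact (h01 _).1
    · linarith [(h01 (∑ k, X i k * β k)).2]
  have hLcont : Continuous L := by
    apply continuous_finset_prod
    intro i _
    have hsum : Continuous fun β : Fin p → ℝ => ∑ k, X i k * β k :=
      continuous_finset_sum _ fun k _ => (continuous_const.mul (continuous_apply k))
    by_cases hy : y i <;> simp only [hy, if_true, if_false, Bool.false_eq_true]
    · exact hcont.comp hsum
    · exact continuous_const.sub (hcont.comp hsum)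
  -- compact set K and minimum ε
  set K : Set (Fin p → ℝ) := Set.pi Set.univ
    (fun k => if k = j then ({0} : Set ℝ) else Icc (-1) 1) with hK
  have hKc : IsCompact K := by
    apply isCompact_univ_pi
    intro k
    by_cases h : k = j <;> simp only [h, if_true, if_false]
    · exact isCompact_singleton
    · exact isCompact_Icc
  have hKne : K.Nonempty := by
    refine ⟨fun _ => 0, fun k _ => ?_⟩
    by_cases h : k = j <;> simp [h]
  obtain ⟨β₀, hβ₀K, hmin⟩ := hKc.exists_isMinOn hKne hLcont.continuousOn
  set ε : ℝ := L β₀ with hε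
  have hεpos : 0 < ε := hLpos β₀
  -- monotonicity of L along coordinate j
  have hsum_update : ∀ (i : Fin n) (β : Fin p → ℝ),
      ∑ k, X i k * Function.update β j 0 k = (∑ k, X i k * β k) - X i j * β j := by
    intro i β
    have h1 : (fun k => X i k * Function.update β j 0 k)
        = Function.update (fun k => X i k * β k) j 0 := by
      ext k
      rw [Function.update_apply, Function.update_apply]
      split <;> simp [*]
    rw [h1, Finset.sum_update_of_mem (Finset.mem_univ j)]
    have h2 := Finset.add_sum_erase Finset.univ (fun k => X i k * β k) (Finset.mem_univ j)
    simp only [Finset.erase_eq] at h2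
    rw [zero_add]
    linarith
  have hmonoL : ∀ β : Fin p → ℝ, 0 ≤ s * β j → L (Function.update β j 0) ≤ L β := by
    intro β hsβ
    apply Finset.prod_le_prod
    · intro i _
      by_cases hy : y i <;> simp only [hy, if_true, if_false, Bool.false_eq_true]
      · exact (h01 _).1.le
      · linarith [(h01 (∑ k, X i k * Function.update β j 0 k)).2]
    · intro i _
      have hss : 0 < s * s := mul_self_pos.2 hs
      rw [hsum_update i β]
      by_cases hy : y i <;> simp only [hy, if_true, if_false, Bool.false_eq_true]
      · -- y i = true : 0 ≤ s * X i j, so 0 ≤ X i j * β j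
        have h1 : 0 ≤ s * X i j := (hsep i).1 hy
        have h2 : 0 ≤ X i j * β j := by nlinarith
        exact hmono.monotone (by linarith)
      · have h1 : s * X i j ≤ 0 := (hsep i).2 (by simpa using hy)
        have h2 : X i j * β j ≤ 0 := by nlinarith
        have := hmono.monotone (show (∑ k, X i k * β k) ≤ (∑ k, X i k * β k) - X i j * β j by linarith)
        linarith
  -- L is at least ε on the region S
  have hLge : ∀ β : Fin p → ℝ, 0 ≤ s * β j → (∀ k, k ≠ j → β k ∈ Icc (-1:ℝ) 1) → ε ≤ L β := by
    intro β h1 h2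
    refine le_trans (hmin ?_) (hmonoL β h1)
    intro k _
    by_cases h : k = j
    · subst h; simp [Function.update_self]
    · simp only [Function.update_of_ne h, if_neg h]
      exact h2 k h
  -- the comparison function
  set g : Fin p → ℝ → ENNReal := fun k => if k = j then
      ({t : ℝ | 0 ≤ s * t}.indicator
        (fun t => ENNReal.ofReal (ε * |t| * (π * σ j * (1 + t^2/(σ j)^2))⁻¹)))
    else ((Icc (-1:ℝ) 1).indicator
        (fun t => ENNReal.ofReal ((π * σ k * (1 + t^2/(σ k)^2))⁻¹))) with hg
  have hgmeas : ∀ k, Measurable (g k) := by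
    intro k
    rw [hg]
    by_cases h : k = j <;> simp only [h, if_true, if_false]
    · refine Measurable.indicator ?_ ?_
      · exact ENNReal.measurable_ofReal.comp
          (((continuous_const.mul continuous_abs).mul
            ((continuous_const.mul (continuous_const.add
              ((continuous_pow 2).div_const _))).inv₀ (fun t => show π * σ j * (1 + t^2/(σ j)^2) ≠ 0 by have := hσ j; positivity))).measurable)
      · exact measurableSet_le measurable_const (measurable_const.mul measurable_id)
    · refine Measurable.indicator ?_ measurableSet_Icc
      exact ENNReal.measurable_ofReal.comp
          (((continuous_const.mul (continuous_const.add
              ((continuous_pow 2).div_const _))).inv₀ (fun t => show π * σ k * (1 + t^2/(σ k)^2) ≠ 0 by have := hσ k; positivity)).measurable)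
  -- pointwise bound
  have hbound : ∀ β : Fin p → ℝ, (∏ k, g k (β k)) ≤ ENNReal.ofReal
      (|β j| * (L β * ∏ k, (π * σ k * (1 + (β k)^2/(σ k)^2))⁻¹)) := by
    intro β
    by_cases h1 : (0:ℝ) ≤ s * β j
    · by_cases h2 : ∀ k, k ≠ j → β k ∈ Icc (-1:ℝ) 1
      · have hεL := hLge β h1 h2
        set r : Fin p → ℝ := fun k => if k = j then
            ε * |β j| * (π * σ j * (1 + (β j)^2/(σ j)^2))⁻¹
          else (π * σ k * (1 + (β k)^2/(σ k)^2))⁻¹ with hr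
        have hrnonneg : ∀ k, 0 ≤ r k := by
          intro k
          rw [hr]
          by_cases h : k = j <;> simp only [h, if_true, if_false]
          · exact mul_nonneg (mul_nonneg hεpos.le (abs_nonneg _)) (hpr j (β j)).le
          · exact (hpr k (β k)).le
        have hfac : ∀ k, g k (β k) = ENNReal.ofReal (r k) := by
          intro k
          rw [hg, hr]
          by_cases h : k = j <;> simp only [h, if_true, if_false]
          · exact Set.indicator_of_mem (show β j ∈ {t : ℝ | 0 ≤ s * t} from h1) _
          · exact Set.indicator_of_mem (h2 k h) _
        have hprod : (∏ k, g k (β k)) = ENNReal.ofReal (∏ k, r k) := by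
          rw [ENNReal.ofReal_prod_of_nonneg (fun k _ => hrnonneg k)]
          exact Finset.prod_congr rfl fun k _ => hfac k
        rw [hprod]
        apply ENNReal.ofReal_le_ofReal
        have hr1 : (∏ k, r k) = ε * |β j| *
            ∏ k, (π * σ k * (1 + (β k)^2/(σ k)^2))⁻¹ := by
          rw [← Finset.mul_prod_erase Finset.univ r (Finset.mem_univ j),
              ← Finset.mul_prod_erase Finset.univ
                (fun k => (π * σ k * (1 + (β k)^2/(σ k)^2))⁻¹) (Finset.mem_univ j)]
          have he : ∏ k ∈ Finset.univ.erase j, r k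
              = ∏ k ∈ Finset.univ.erase j, (π * σ k * (1 + (β k)^2/(σ k)^2))⁻¹ := by
            refine Finset.prod_congr rfl fun k hk => ?_
            rw [hr]
            simp only [if_neg (Finset.ne_of_mem_erase hk)]
          rw [he, hr]
          simp only [eq_self_iff_true, if_true]
          ring
        rw [hr1]
        have hprior : (0:ℝ) ≤ ∏ k, (π * σ k * (1 + (β k)^2/(σ k)^2))⁻¹ :=
          Finset.prod_nonneg fun k _ => (hpr k (β k)).le
        nlinarith [abs_nonneg (β j), mul_nonneg (abs_nonneg (β j)) hprior,
          mul_le_mul_of_nonneg_right hεL (mul_nonneg (abs_nonneg (β j)) hprior)]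
      · push_neg at h2
        obtain ⟨k, hk, hkmem⟩ := h2
        refine le_trans (le_of_eq (Finset.prod_eq_zero (Finset.mem_univ k) ?_)) (zero_le)
        rw [hg]
        simp only [if_neg hk]
        exact Set.indicator_of_notMem hkmem _
    · refine le_trans (le_of_eq (Finset.prod_eq_zero (Finset.mem_univ j) ?_)) (zero_le)
      rw [hg]
      simp only [eq_self_iff_true, if_true]
      exact Set.indicator_of_notMem (show β j ∉ {t : ℝ | 0 ≤ s * t} from h1) _
  -- the lintegral of the comparison function is infinite
  have htop : ∫⁻ β : Fin p → ℝ, ∏ k, g k (β k) = ⊤ := by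
    rw [lintegral_pi_prod' g hgmeas]
    have hj : ∫⁻ t, g j t = ⊤ := by
      rw [hg]
      simp only [eq_self_iff_true, if_true]
      exact lint_gj s (σ j) ε hs (hσ j) hεpos
    have hne : ∀ k : Fin p, k ≠ j → ∫⁻ t, g k t ≠ 0 := by
      intro k hk
      rw [hg]
      simp only [if_neg hk]
      rw [lintegral_indicator measurableSet_Icc]
      have hdpos : (0:ℝ) < (π * σ k * (1 + 1/(σ k)^2))⁻¹ := by
        have := hσ k
        positivity
      have hge : ENNReal.ofReal ((π * σ k * (1 + 1/(σ k)^2))⁻¹) * volume (Icc (-1:ℝ) 1)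
          ≤ ∫⁻ t in Icc (-1:ℝ) 1, ENNReal.ofReal ((π * σ k * (1 + t^2/(σ k)^2))⁻¹) := by
        rw [← setLIntegral_const]
        apply setLIntegral_mono' measurableSet_Icc
        intro t ht
        apply ENNReal.ofReal_le_ofReal
        have hσk := hσ k
        apply inv_anti₀ (by positivity)
        have ht2 : t^2 ≤ 1 := by
          rcases ht with ⟨ha, hb⟩; nlinarith
        have h3 : t^2/(σ k)^2 ≤ 1/(σ k)^2 := by
          apply div_le_div_of_nonneg_right ht2 <;> positivity
        have h4 : 1 + t^2/(σ k)^2 ≤ 1 + 1/(σ k)^2 := by linarith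
        nlinarith [mul_pos hπ hσk]
      intro h0
      rw [h0] at hge
      rw [Real.volume_Icc] at hge
      have hv : ((1:ℝ) - (-1)) = 2 := by norm_num
      rw [hv] at hge
      have hlt : (0:ENNReal) < ENNReal.ofReal ((π * σ k * (1 + 1/(σ k)^2))⁻¹) * ENNReal.ofReal 2 := by
        apply ENNReal.mul_pos
        · exact (ENNReal.ofReal_pos.2 hdpos).ne'
        · exact (ENNReal.ofReal_pos.2 (by norm_num : (0:ℝ) < 2)).ne'
      exact absurd hge (not_le.2 hlt)
    rw [← Finset.mul_prod_erase Finset.univ _ (Finset.mem_univ j), hj,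
        ENNReal.top_mul]
    exact Finset.prod_ne_zero_iff.2 fun k hk => hne k (Finset.ne_of_mem_erase hk)
  -- contradiction
  have hfin : (∫⁻ β : Fin p → ℝ,
      ((‖|β j| * (L β * ∏ k, (π * σ k * (1 + (β k)^2/(σ k)^2))⁻¹)‖₊ : ENNReal))) < ⊤ := hI.2
  have hle : (∫⁻ β : Fin p → ℝ, ∏ k, g k (β k)) ≤ ∫⁻ β : Fin p → ℝ,
      ((‖|β j| * (L β * ∏ k, (π * σ k * (1 + (β k)^2/(σ k)^2))⁻¹)‖₊ : ENNReal)) := by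
    apply lintegral_mono
    intro β
    refine (hbound β).trans ?_
    exact (ENNReal.ofReal_le_ofReal (le_abs_self _)).trans
      (le_of_eq (Real.enorm_eq_ofReal_abs _).symm)
  rw [htop, top_le_iff] at hle
  rw [hle] at hfin
  exact lt_irrefl _ hfin
end

section
/- In logistic regression with independent Cauchy priors β_j ~ C(μ_j, σ_j) having arbitrary location parameters μ_j, the posterior mean E(β_j | y) exists if and only if X_j is not a solitary separator. -/
open Real MeasureTheory Set

/-- Cauchy density positivity -/
lemma aux_cauchy_pos {s : ℝ} (hs : 0 < s) (m x : ℝ) :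
    0 < (π * s * (1 + (x - m) ^ 2 / s ^ 2))⁻¹ := by
  have h1 : 0 < 1 + (x - m) ^ 2 / s ^ 2 := by positivity
  have := Real.pi_pos
  positivity

lemma aux_cauchy_cont {s : ℝ} (hs : 0 < s) (m : ℝ) :
    Continuous (fun x : ℝ => (π * s * (1 + (x - m) ^ 2 / s ^ 2))⁻¹) := by
  apply Continuous.inv₀
  · fun_prop
  · intro x
    exact ne_of_gt (by have h1 : (0:ℝ) < 1 + (x - m) ^ 2 / s ^ 2 := by positivity
                       have := Real.pi_pos; positivity)

/-- The Cauchy density is integrable. -/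
lemma aux_cauchy_integrable {s : ℝ} (hs : 0 < s) (m : ℝ) :
    Integrable (fun x : ℝ => (π * s * (1 + (x - m) ^ 2 / s ^ 2))⁻¹) := by
  have h : (fun x : ℝ => (π * s * (1 + (x - m) ^ 2 / s ^ 2))⁻¹)
      = fun x : ℝ => (π * s)⁻¹ * (1 + ((x - m) / s) ^ 2)⁻¹ := by
    funext x
    rw [div_pow, ← mul_inv]
  rw [h]
  exact ((integrable_inv_one_add_sq.comp_div (ne_of_gt hs)).comp_sub_right m).const_mul _

lemma aux_sqrt_base_cont : Continuous (fun u : ℝ => √|u| * (1 + u ^ 2)⁻¹) := by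
  apply Continuous.mul
  · exact Real.continuous_sqrt.comp continuous_abs
  · exact Continuous.inv₀ (by fun_prop) (fun x => by positivity)

lemma aux_sqrt_base_integrable : Integrable (fun u : ℝ => √|u| * (1 + u ^ 2)⁻¹) := by
  have hIoi : IntegrableOn (fun u : ℝ => √|u| * (1 + u ^ 2)⁻¹) (Ioi 0) := by
    rw [← Ioc_union_Ioi_eq_Ioi (zero_le_one), integrableOn_union]
    constructor
    · exact aux_sqrt_base_cont.integrableOn_Ioc
    · apply Integrable.mono' (integrableOn_Ioi_rpow_of_lt (by norm_num : (-3/2 : ℝ) < -1) zero_lt_one)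
      · exact aux_sqrt_base_cont.aestronglyMeasurable
      · filter_upwards [ae_restrict_mem measurableSet_Ioi] with x hx
        have hx1 : (1:ℝ) < x := hx
        have hx0 : (0:ℝ) < x := by linarith
        rw [Real.norm_eq_abs, abs_of_nonneg (by positivity)]
        have h1 : √|x| = x ^ (1/2 : ℝ) := by
          rw [abs_of_nonneg hx0.le, Real.sqrt_eq_rpow]
        have h2 : (1 + x ^ 2)⁻¹ ≤ x ^ (-2 : ℝ) := by
          rw [Real.rpow_neg hx0.le, Real.rpow_two]
          exact inv_anti₀ (by positivity) (by nlinarith)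
        calc √|x| * (1 + x ^ 2)⁻¹ ≤ x ^ (1/2:ℝ) * x ^ (-2:ℝ) := by
              rw [h1]; exact mul_le_mul_of_nonneg_left h2 (by positivity)
          _ = x ^ (-3/2 : ℝ) := by rw [← Real.rpow_add hx0]; norm_num
  have hIio : IntegrableOn (fun u : ℝ => √|u| * (1 + u ^ 2)⁻¹) (Iio 0) := by
    rw [← (Measure.measurePreserving_neg (volume : Measure ℝ)).integrableOn_comp_preimage
        (Homeomorph.neg ℝ).measurableEmbedding]
    simp only [Function.comp_def, abs_neg, neg_sq, neg_preimage, neg_Iio, neg_zero]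
    exact hIoi
  rw [← integrableOn_univ, ← Iio_union_Ici (a := (0:ℝ)), integrableOn_union,
    integrableOn_Ici_iff_integrableOn_Ioi]
  exact ⟨hIio, hIoi⟩

lemma aux_sqrt_scaled_integrable {s : ℝ} (hs : 0 < s) :
    Integrable (fun t : ℝ => √|t| * (π * s * (1 + t ^ 2 / s ^ 2))⁻¹) := by
  have h0 := (aux_sqrt_base_integrable.comp_div (ne_of_gt hs)).const_mul (√s * (π * s)⁻¹)
  apply h0.congr
  · filter_upwards with t
    have hπ := Real.pi_pos
    have h1 : √|t / s| = √|t| / √s := by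
      rw [abs_div, abs_of_nonneg hs.le, Real.sqrt_div (abs_nonneg t)]
    have hss : √s ≠ 0 := by positivity
    have hden : (0:ℝ) < 1 + t ^ 2 / s ^ 2 := by positivity
    rw [h1, mul_inv, mul_inv]
    field_simp

lemma aux_sqrt_add_le {a b : ℝ} (ha : 0 ≤ a) (hb : 0 ≤ b) : √(a + b) ≤ √a + √b := by
  have h : √(a+b) ≤ √((√a + √b)^2) := by
    apply Real.sqrt_le_sqrt
    nlinarith [Real.sq_sqrt ha, Real.sq_sqrt hb, Real.sqrt_nonneg a, Real.sqrt_nonneg b]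
  rwa [Real.sqrt_sq (by positivity)] at h

lemma aux_sqrt_cauchy_integrable {s : ℝ} (hs : 0 < s) (m : ℝ) :
    Integrable (fun x : ℝ => √|x| * (π * s * (1 + (x - m) ^ 2 / s ^ 2))⁻¹) := by
  have hmaj : Integrable (fun x : ℝ =>
      √|x - m| * (π * s * (1 + (x - m) ^ 2 / s ^ 2))⁻¹
      + √|m| * (π * s * (1 + (x - m) ^ 2 / s ^ 2))⁻¹) := by
    apply Integrable.add
    · exact (aux_sqrt_scaled_integrable hs).comp_sub_right m
    · exact (aux_cauchy_integrable hs m).const_mul _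
  apply hmaj.mono'
  · exact ((Real.continuous_sqrt.comp continuous_abs).mul (aux_cauchy_cont hs m)).aestronglyMeasurable
  · filter_upwards with x
    have hc := (aux_cauchy_pos hs m x).le
    rw [Real.norm_eq_abs, abs_of_nonneg (by positivity)]
    have h1 : √|x| ≤ √|x - m| + √|m| := by
      apply le_trans ?_ (aux_sqrt_add_le (abs_nonneg _) (abs_nonneg _))
      apply Real.sqrt_le_sqrt
      calc |x| = |(x - m) + m| := by ring_nf
        _ ≤ |x - m| + |m| := abs_add_le _ _
    nlinarith [Real.sqrt_nonneg |x|, Real.sqrt_nonneg |x-m|, Real.sqrt_nonneg |m|]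

lemma aux_key {a r x : ℝ} (ha : a < 0) (hx : 0 ≤ x) :
    x * min 1 (Real.exp (a * x + r)) ≤ √x * √((1 + max r 0) / (-a)) := by
  set m : ℝ := (1 + max r 0) / (-a) with hm
  have hM0 : 0 ≤ max r 0 := le_max_right r 0
  have hm0 : 0 < m := div_pos (by linarith) (by linarith)
  have h4 : (-a) * m = 1 + max r 0 := by
    rw [hm]; field_simp
    exact div_self (ne_of_lt ha)
  rcases le_or_gt x m with h | h
  · calc x * min 1 (Real.exp (a * x + r)) ≤ x * 1 :=
          mul_le_mul_of_nonneg_left (min_le_left _ _) hx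
      _ = √x * √x := by rw [mul_one, Real.mul_self_sqrt hx]
      _ ≤ √x * √m := mul_le_mul_of_nonneg_left (Real.sqrt_le_sqrt h) (Real.sqrt_nonneg x)
  · have hax : a * x + r < 0 := by
      have h5 : a * m + r ≤ -1 := by
        have : a * m = -(1 + max r 0) := by linarith [h4]
        rw [this]
        have := le_max_left r 0
        linarith
      have : a * x < a * m := (mul_lt_mul_left_of_neg ha).mpr h
      linarith
    have h6 : (0:ℝ) < 1 - (a * x + r) := by linarith
    have hexp : Real.exp (a * x + r) ≤ (1 - (a * x + r))⁻¹ := by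
      rw [show Real.exp (a * x + r) = (Real.exp (-(a * x + r)))⁻¹ by
        rw [Real.exp_neg, inv_inv]]
      apply inv_anti₀ h6
      have := Real.add_one_le_exp (-(a * x + r)); linarith
    have hxm : x * Real.exp (a * x + r) ≤ m := by
      have h3 : x * (1 - (a * x + r))⁻¹ ≤ m := by
        rw [← div_eq_mul_inv, div_le_iff₀ h6]
        have hmx : m * (1 - (a * x + r)) = m + (1 + max r 0) * x - m * r := by
          have : m * (-a * x) = (1 + max r 0) * x := by rw [← h4]; ring
          nlinarith [this]
        rw [hmx]
        rcases le_or_gt r 0 with hr | hr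
        · have : max r 0 = 0 := max_eq_right hr
          nlinarith
        · have : max r 0 = r := max_eq_left hr.le
          nlinarith
      calc x * Real.exp (a * x + r) ≤ x * (1 - (a * x + r))⁻¹ :=
            mul_le_mul_of_nonneg_left hexp hx
        _ ≤ m := h3
    calc x * min 1 (Real.exp (a * x + r)) ≤ x * Real.exp (a * x + r) :=
          mul_le_mul_of_nonneg_left (min_le_right _ _) hx
      _ ≤ m := hxm
      _ = √m * √m := (Real.mul_self_sqrt hm0.le).symm
      _ ≤ √x * √m := mul_le_mul_of_nonneg_right (Real.sqrt_le_sqrt h.le) (Real.sqrt_nonneg m)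

lemma aux_sqrt_sum_le {ι : Type*} (s : Finset ι) (u : ι → ℝ) (hu : ∀ i ∈ s, 0 ≤ u i) :
    √(1 + ∑ i ∈ s, u i) ≤ 1 + ∑ i ∈ s, √(u i) := by
  classical
  induction s using Finset.induction_on with
  | empty => simp
  | insert a t hnotmem ih =>
    rw [Finset.sum_insert hnotmem, Finset.sum_insert hnotmem]
    have h1 : √(1 + (u a + ∑ i ∈ t, u i)) ≤ √(u a) + √(1 + ∑ i ∈ t, u i) := by
      rw [show 1 + (u a + ∑ i ∈ t, u i) = u a + (1 + ∑ i ∈ t, u i) by ring]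
      apply aux_sqrt_add_le (hu a (Finset.mem_insert_self a t))
      have h0 : (0:ℝ) ≤ ∑ i ∈ t, u i :=
        Finset.sum_nonneg (fun i hi => hu i (Finset.mem_insert_of_mem hi))
      linarith
    have h2 := ih (fun i hi => hu i (Finset.mem_insert_of_mem hi))
    linarith

lemma aux_lintegral_fin_prod : ∀ {n : ℕ} (f : Fin n → ℝ → ENNReal), (∀ i, Measurable (f i)) →
    ∫⁻ x : Fin n → ℝ, ∏ i, f i (x i) = ∏ i, ∫⁻ x, f i x := by
  intro n
  induction n with
  | zero => intro f hf; simp [volume_pi]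
  | succ n ih =>
    intro f hf
    have h := ((measurePreserving_piFinSuccAbove (fun _ : Fin (n+1) => (volume : Measure ℝ)) 0).symm)
    rw [volume_pi, ← h.lintegral_comp_emb (MeasurableEquiv.measurableEmbedding _)]
    simp_rw [MeasurableEquiv.piFinSuccAbove_symm_apply, Fin.insertNthEquiv,
      Fin.prod_univ_succ, Fin.insertNth_zero]
    simp only [Fin.zero_succAbove, Nat.cast_id, cast_eq, Function.comp_def, Fin.cons_zero,
      Fin.cons_succ, Equiv.coe_fn_mk]
    have h2 : AEMeasurable (fun w : Fin n → ℝ => ∏ x : Fin n, f x.succ (w x))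
        (Measure.pi fun _ => (volume : Measure ℝ)) :=
      (Finset.measurable_prod Finset.univ
        (fun j _ => (hf j.succ).comp (measurable_pi_apply j))).aemeasurable
    rw [lintegral_prod_mul (hf 0).aemeasurable h2]
    rw [← volume_pi, ih (fun j => f (Fin.succ j)) (fun j => hf _)]

lemma aux_not_integrableOn {s : ℝ} (hs : 0 < s) (m : ℝ) :
    ¬ IntegrableOn (fun x : ℝ => |x| * (π * s * (1 + (x - m) ^ 2 / s ^ 2))⁻¹) (Ioi 0) := by
  intro H
  have hπ := Real.pi_pos
  set A : ℝ := π * s + π * (1 + |m|) ^ 2 / s with hA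
  have hA0 : 0 < A := by positivity
  set x₀ : ℝ := 1 + |m| with hx₀
  have hx₀1 : (1:ℝ) ≤ x₀ := by simp [hx₀, abs_nonneg]
  have hx₀0 : (0:ℝ) < x₀ := by linarith
  apply not_IntegrableOn_Ioi_inv (a := x₀)
  apply Integrable.mono' ((H.mono (Ioi_subset_Ioi (by linarith)) le_rfl).const_mul A)
  · exact measurable_inv.aestronglyMeasurable
  · filter_upwards [ae_restrict_mem measurableSet_Ioi] with x hx
    have hx1 : x₀ < x := hx
    have hx0 : (0:ℝ) < x := lt_trans hx₀0 hx1
    rw [Real.norm_eq_abs, abs_of_nonneg (inv_nonneg.2 hx0.le), abs_of_nonneg hx0.le]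
    set D : ℝ := π * s * (1 + (x - m) ^ 2 / s ^ 2) with hD
    have hD0 : 0 < D := by positivity
    have hDA : D ≤ A * x ^ 2 := by
      rw [hD, hA]
      have hx1' : (1:ℝ) ≤ x := by linarith
      have habs : |m| ≤ |m| * x := by nlinarith [abs_nonneg m]
      have h1 : (x - m) ^ 2 ≤ ((1 + |m|) * x) ^ 2 := by
        apply sq_le_sq'
        · nlinarith [le_abs_self m, neg_abs_le m, abs_nonneg m]
        · nlinarith [le_abs_self m, neg_abs_le m, abs_nonneg m]
      have h2 : (1:ℝ) ≤ x ^ 2 := by nlinarith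
      have h3 : π * s * (x - m)^2 / s^2 = π * (x-m)^2 / s := by
        field_simp
      calc π * s * (1 + (x - m) ^ 2 / s ^ 2)
          = π * s + π * (x - m)^2 / s := by field_simp
        _ ≤ π * s * x^2 + π * ((1+|m|)*x)^2 / s := by
            apply add_le_add
            · nlinarith [mul_le_mul_of_nonneg_left h2 (le_of_lt (mul_pos hπ hs))]
            · gcongr
        _ = (π * s + π * (1 + |m|) ^ 2 / s) * x ^ 2 := by field_simp
    calc x⁻¹ = (A * x) / (A * x^2) := by field_simp
      _ ≤ (A * x) / D := by
          apply div_le_div_of_nonneg_left (by positivity) hD0 hDA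
      _ = A * (x * D⁻¹) := by ring

lemma aux_lg_le_one (η : ℝ) : Real.exp η / (1 + Real.exp η) ≤ 1 := by
  rw [div_le_one (by positivity)]; linarith

lemma aux_lg_le_exp (η : ℝ) : Real.exp η / (1 + Real.exp η) ≤ Real.exp η := by
  rw [div_le_iff₀ (by positivity)]
  nlinarith [Real.exp_pos η, sq_nonneg (Real.exp η)]

lemma aux_lg0_le_one (η : ℝ) : 1 / (1 + Real.exp η) ≤ 1 := by
  rw [div_le_one (by positivity)]; linarith [Real.exp_pos η]

lemma aux_lg0_le_exp (η : ℝ) : 1 / (1 + Real.exp η) ≤ Real.exp (-η) := by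
  rw [div_le_iff₀ (by positivity), Real.exp_neg]
  have h := Real.exp_pos η
  rw [inv_mul_eq_div, le_div_iff₀ h]
  nlinarith

lemma aux_lg_pos (η : ℝ) : 0 < Real.exp η / (1 + Real.exp η) := by positivity

lemma aux_lg0_pos (η : ℝ) : 0 < 1 / (1 + Real.exp η) := by positivity

lemma aux_lower1 {R η : ℝ} (hR : 0 ≤ R) (hη : -R ≤ η) :
    1 / 2 * Real.exp (-R) ≤ Real.exp η / (1 + Real.exp η) := by
  have h1 : Real.exp (-R) ≤ Real.exp η := Real.exp_le_exp.2 hη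
  have h2 : Real.exp (-R) ≤ 1 := Real.exp_le_one_iff.2 (by linarith)
  have h3 : Real.exp (-R) / (1 + Real.exp (-R)) ≤ Real.exp η / (1 + Real.exp η) := by
    rw [div_le_div_iff₀ (by positivity) (by positivity)]
    nlinarith
  have h4 : 1 / 2 * Real.exp (-R) ≤ Real.exp (-R) / (1 + Real.exp (-R)) := by
    rw [le_div_iff₀ (by positivity)]
    nlinarith [Real.exp_pos (-R)]
  linarith

lemma aux_lower2 {R η : ℝ} (hR : 0 ≤ R) (hη : η ≤ R) :
    1 / 2 * Real.exp (-R) ≤ 1 / (1 + Real.exp η) := by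
  have h1 : Real.exp η ≤ Real.exp R := Real.exp_le_exp.2 hη
  have h5 : Real.exp (-R) * Real.exp R = 1 := by
    rw [← Real.exp_add]; simp
  have h2 : Real.exp (-R) ≤ 1 := Real.exp_le_one_iff.2 (by linarith)
  rw [le_div_iff₀ (by positivity)]
  nlinarith [Real.exp_pos R, Real.exp_pos (-R)]

lemma aux_prod_integrable {p : ℕ} (μ σ : Fin p → ℝ) (hσ : ∀ k, 0 < σ k) (S : Finset (Fin p)) :
    Integrable (fun β : Fin p → ℝ =>
      (∏ k ∈ S, √|β k|) * ∏ k, (π * σ k * (1 + (β k - μ k) ^ 2 / σ k ^ 2))⁻¹) := by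
  classical
  set cau : Fin p → ℝ → ℝ := fun k x => (π * σ k * (1 + (x - μ k) ^ 2 / σ k ^ 2))⁻¹ with hcau
  set f : Fin p → ℝ → ℝ := fun k x => if k ∈ S then √|x| * cau k x else cau k x with hf
  have hint : ∀ k, Integrable (f k) := by
    intro k
    by_cases h : k ∈ S <;> simp only [hf, h, if_true, if_false]
    · exact aux_sqrt_cauchy_integrable (hσ k) (μ k)
    · exact aux_cauchy_integrable (hσ k) (μ k)
  apply (Integrable.fintype_prod hint).congr
  filter_upwards with β
  calc ∏ k, f k (β k)
      = (∏ k ∈ S, f k (β k)) * ∏ k ∈ Sᶜ, f k (β k) := (Finset.prod_mul_prod_compl S _).symm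
    _ = (∏ k ∈ S, √|β k| * cau k (β k)) * ∏ k ∈ Sᶜ, cau k (β k) := by
        congr 1
        · exact Finset.prod_congr rfl (fun k hk => by simp [hf, hk])
        · exact Finset.prod_congr rfl (fun k hk => by
            simp [hf, (Finset.mem_compl.1 hk)])
    _ = (∏ k ∈ S, √|β k|) * ((∏ k ∈ S, cau k (β k)) * ∏ k ∈ Sᶜ, cau k (β k)) := by
        rw [Finset.prod_mul_distrib]; ring
    _ = (∏ k ∈ S, √|β k|) * ∏ k, cau k (β k) := by rw [Finset.prod_mul_prod_compl]

noncomputable def aCau (m s x : ℝ) : ℝ := (π * s * (1 + (x - m) ^ 2 / s ^ 2))⁻¹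

noncomputable def aFac {p : ℕ} (v : Fin p → ℝ) (b : Bool) (β : Fin p → ℝ) : ℝ :=
  if b then Real.exp (∑ k, v k * β k) / (1 + Real.exp (∑ k, v k * β k))
  else 1 / (1 + Real.exp (∑ k, v k * β k))

noncomputable def aL {n p : ℕ} (X : Fin n → Fin p → ℝ) (y : Fin n → Bool) (β : Fin p → ℝ) : ℝ :=
  ∏ i, aFac (X i) (y i) β

noncomputable def aPr {p : ℕ} (μ σ : Fin p → ℝ) (β : Fin p → ℝ) : ℝ :=
  ∏ k, aCau (μ k) (σ k) (β k)

noncomputable def aG {n p : ℕ} (X : Fin n → Fin p → ℝ) (y : Fin n → Bool) (μ σ : Fin p → ℝ)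
    (j : Fin p) (β : Fin p → ℝ) : ℝ :=
  |β j| * (aL X y β * aPr μ σ β)

lemma aCau_pos {s : ℝ} (hs : 0 < s) (m x : ℝ) : 0 < aCau m s x := by
  have h1 : 0 < 1 + (x - m) ^ 2 / s ^ 2 := by positivity
  have := Real.pi_pos
  unfold aCau; positivity

lemma aFac_pos {p : ℕ} (v : Fin p → ℝ) (b : Bool) (β : Fin p → ℝ) : 0 < aFac v b β := by
  unfold aFac
  cases b <;> simp <;> positivity

lemma aFac_le_one {p : ℕ} (v : Fin p → ℝ) (b : Bool) (β : Fin p → ℝ) : aFac v b β ≤ 1 := by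
  unfold aFac
  cases b <;> simp only [if_true, if_false, Bool.false_eq_true]
  · rw [div_le_one (by positivity)]; linarith [Real.exp_pos (∑ k, v k * β k)]
  · rw [div_le_one (by positivity)]; linarith [Real.exp_pos (∑ k, v k * β k)]

lemma aL_pos {n p : ℕ} (X : Fin n → Fin p → ℝ) (y : Fin n → Bool) (β : Fin p → ℝ) :
    0 < aL X y β :=
  Finset.prod_pos (fun i _ => aFac_pos _ _ _)

lemma aL_le_one {n p : ℕ} (X : Fin n → Fin p → ℝ) (y : Fin n → Bool) (β : Fin p → ℝ) :
    aL X y β ≤ 1 :=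
  Finset.prod_le_one (fun i _ => (aFac_pos _ _ _).le) (fun i _ => aFac_le_one _ _ _)

lemma aPr_pos {p : ℕ} (μ σ : Fin p → ℝ) (hσ : ∀ k, 0 < σ k) (β : Fin p → ℝ) :
    0 < aPr μ σ β :=
  Finset.prod_pos (fun k _ => aCau_pos (hσ k) _ _)

lemma aG_nonneg {n p : ℕ} (X : Fin n → Fin p → ℝ) (y : Fin n → Bool) (μ σ : Fin p → ℝ)
    (hσ : ∀ k, 0 < σ k) (j : Fin p) (β : Fin p → ℝ) : 0 ≤ aG X y μ σ j β := by
  have := aL_pos X y β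
  have := aPr_pos μ σ hσ β
  unfold aG; positivity

lemma aCau_cont {s : ℝ} (hs : 0 < s) (m : ℝ) : Continuous (aCau m s) := by
  have h : ∀ x : ℝ, (0:ℝ) < π * s * (1 + (x - m) ^ 2 / s ^ 2) := fun x => by
    have := Real.pi_pos
    have h1 : (0:ℝ) < 1 + (x - m) ^ 2 / s ^ 2 := by positivity
    positivity
  unfold aCau
  exact Continuous.inv₀ (by fun_prop) (fun x => (h x).ne')

lemma aG_cont {n p : ℕ} (X : Fin n → Fin p → ℝ) (y : Fin n → Bool) (μ σ : Fin p → ℝ)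
    (hσ : ∀ k, 0 < σ k) (j : Fin p) : Continuous (aG X y μ σ j) := by
  apply Continuous.mul
  · exact (continuous_abs.comp (continuous_apply j))
  apply Continuous.mul
  · apply continuous_finset_prod
    intro i _
    unfold aFac
    have hs : Continuous (fun β : Fin p → ℝ => ∑ k, X i k * β k) := by fun_prop
    cases y i <;> simp only [if_true, if_false, Bool.false_eq_true]
    · exact Continuous.div continuous_const (by fun_prop) (fun β => by positivity)
    · exact Continuous.div (by fun_prop) (by fun_prop) (fun β => by positivity)
  · apply continuous_finset_prod
    intro k _
    exact (aCau_cont (hσ k) (μ k)).comp (continuous_apply k)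

lemma aL_le_min {n p : ℕ} (X : Fin n → Fin p → ℝ) (y : Fin n → Bool) (i₀ : Fin n)
    (β : Fin p → ℝ) :
    aL X y β ≤ min 1 (Real.exp (∑ k, (if y i₀ then X i₀ k else -X i₀ k) * β k)) := by
  apply le_min (aL_le_one X y β)
  have h1 : aL X y β ≤ aFac (X i₀) (y i₀) β := by
    rw [aL, ← Finset.mul_prod_erase Finset.univ _ (Finset.mem_univ i₀)]
    have h2 : ∏ i ∈ Finset.univ.erase i₀, aFac (X i) (y i) β ≤ 1 :=
      Finset.prod_le_one (fun i _ => (aFac_pos _ _ _).le) (fun i _ => aFac_le_one _ _ _)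
    exact mul_le_of_le_one_right (aFac_pos _ _ _).le h2
  refine h1.trans ?_
  unfold aFac
  rcases hyi : y i₀ with _ | _
  · simp only [Bool.false_eq_true, if_false]
    have heq : ∑ k, -X i₀ k * β k = -∑ k, X i₀ k * β k := by
      rw [← Finset.sum_neg_distrib]
      exact Finset.sum_congr rfl (fun k _ => by ring)
    rw [heq]
    exact aux_lg0_le_exp _
  · simp only [if_true]
    exact aux_lg_le_exp _

lemma aux_bwd {n p : ℕ} (X : Fin n → Fin p → ℝ) (y : Fin n → Bool) (μ σ : Fin p → ℝ)
    (hσ : ∀ k, 0 < σ k) (j : Fin p)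
    (h1 : ∃ i : Fin n, (y i = true ∧ X i j < 0) ∨ (y i = false ∧ 0 < X i j))
    (h2 : ∃ i : Fin n, (y i = true ∧ 0 < X i j) ∨ (y i = false ∧ X i j < 0)) :
    Integrable (aG X y μ σ j) := by
  classical
  obtain ⟨i₁, hi₁⟩ := h1
  obtain ⟨i₂, hi₂⟩ := h2
  set c : Fin p → ℝ := fun k => if y i₁ then X i₁ k else -X i₁ k with hc
  set c' : Fin p → ℝ := fun k => if y i₂ then X i₂ k else -X i₂ k with hc'
  have hcj : c j < 0 := by
    rcases hi₁ with ⟨h, h'⟩ | ⟨h, h'⟩ <;> simp [hc, h] <;> linarith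
  have hc'j : 0 < c' j := by
    rcases hi₂ with ⟨h, h'⟩ | ⟨h, h'⟩ <;> simp [hc', h] <;> linarith
  set T : ℝ := min (-c j) (c' j) with hT
  have hT0 : 0 < T := lt_min (by linarith) hc'j
  set E : Fin p → ℝ := fun k => |c k| + |c' k| with hE
  have hE0 : ∀ k, 0 ≤ E k := fun k => by positivity
  set Pr : (Fin p → ℝ) → ℝ := aPr μ σ with hPrd
  -- the majorant
  set W : (Fin p → ℝ) → ℝ := fun β =>
    √(T⁻¹) * ((1 + ∑ k ∈ Finset.univ.erase j, √(E k) * √|β k|) * (√|β j| * Pr β)) with hW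
  have hWint : Integrable W := by
    have hbase : Integrable (fun β : Fin p → ℝ => √|β j| * Pr β) := by
      have base := aux_prod_integrable μ σ hσ {j}
      apply base.congr
      filter_upwards with β
      rw [Finset.prod_singleton]
      rfl
    have hterm : ∀ k₀ ∈ Finset.univ.erase j,
        Integrable (fun β : Fin p → ℝ => √(E k₀) * (√|β k₀| * (√|β j| * Pr β))) := by
      intro k₀ hk₀
      have hne : k₀ ≠ j := Finset.ne_of_mem_erase hk₀
      have base2 := aux_prod_integrable μ σ hσ {k₀, j}
      have hbb : Integrable (fun β : Fin p → ℝ => √|β k₀| * √|β j| * Pr β) := by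
        apply base2.congr
        filter_upwards with β
        rw [Finset.prod_pair hne]
        rfl
      apply (hbb.const_mul (√(E k₀))).congr
      filter_upwards with β
      ring
    have hWeq : ∀ γ : Fin p → ℝ, W γ = √(T⁻¹) * (√|γ j| * Pr γ)
        + ∑ k ∈ Finset.univ.erase j, √(T⁻¹) * (√(E k) * (√|γ k| * (√|γ j| * Pr γ))) := by
      intro γ
      simp only [hW]
      rw [add_mul, one_mul, Finset.sum_mul, mul_add, Finset.mul_sum]
      congr 1
      exact Finset.sum_congr rfl (fun k _ => by ring)
    have hsum : Integrable (fun β : Fin p → ℝ => √(T⁻¹) * (√|β j| * Pr β)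
        + ∑ k ∈ Finset.univ.erase j, √(T⁻¹) * (√(E k) * (√|β k| * (√|β j| * Pr β)))) :=
      (hbase.const_mul _).add
        (integrable_finset_sum _ (fun k hk => (hterm k hk).const_mul _))
    apply hsum.congr
    filter_upwards with β
    rw [← hWeq β]
  -- conclude by domination
  apply hWint.mono' (aG_cont X y μ σ hσ j).aestronglyMeasurable
  filter_upwards with β
  rw [Real.norm_eq_abs, abs_of_nonneg (aG_nonneg X y μ σ hσ j β)]
  have hPr0 : 0 ≤ Pr β := (aPr_pos μ σ hσ β).le
  -- common sum bound
  have hrb : ∀ d : Fin p → ℝ, (∀ k, |d k| ≤ E k) →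
      |∑ k ∈ Finset.univ.erase j, d k * β k| ≤ ∑ k ∈ Finset.univ.erase j, E k * |β k| := by
    intro d hd
    refine (Finset.abs_sum_le_sum_abs _ _).trans ?_
    apply Finset.sum_le_sum
    intro k _
    rw [abs_mul]
    exact mul_le_mul_of_nonneg_right (hd k) (abs_nonneg _)
  have hSnn : ∀ k ∈ Finset.univ.erase j, 0 ≤ E k * |β k| :=
    fun k _ => mul_nonneg (hE0 k) (abs_nonneg _)
  have hfrac : ∀ r : ℝ, |r| ≤ ∑ k ∈ Finset.univ.erase j, E k * |β k| → ∀ a : ℝ, a < 0 → T ≤ -a →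
      √((1 + max r 0) / (-a)) ≤ √(T⁻¹) * (1 + ∑ k ∈ Finset.univ.erase j, √(E k) * √|β k|) := by
    intro r hr a ha hTa
    have hS0 : 0 ≤ ∑ k ∈ Finset.univ.erase j, E k * |β k| := Finset.sum_nonneg hSnn
    have hd1 : (1 + max r 0) / (-a) ≤ (1 + ∑ k ∈ Finset.univ.erase j, E k * |β k|) / T := by
      apply div_le_div₀ (by linarith) ?_ hT0 hTa
      have : max r 0 ≤ |r| := max_le (le_abs_self r) (abs_nonneg r)
      linarith
    refine (Real.sqrt_le_sqrt hd1).trans ?_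
    rw [div_eq_mul_inv, Real.sqrt_mul (by linarith)]
    rw [mul_comm]
    apply mul_le_mul_of_nonneg_left ?_ (Real.sqrt_nonneg _)
    refine (aux_sqrt_sum_le _ _ hSnn).trans ?_
    apply add_le_add le_rfl
    apply le_of_eq
    exact Finset.sum_congr rfl (fun k _ => (Real.sqrt_mul (hE0 k) _))
  rcases le_or_gt 0 (β j) with hβj | hβj
  · -- use c
    have hLb : aL X y β ≤ min 1 (Real.exp (∑ k, c k * β k)) := aL_le_min X y i₁ β
    have hsum : ∑ k, c k * β k = c j * β j + ∑ k ∈ Finset.univ.erase j, c k * β k :=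
      (Finset.add_sum_erase _ _ (Finset.mem_univ j)).symm
    set r : ℝ := ∑ k ∈ Finset.univ.erase j, c k * β k with hr
    have hkey := aux_key (r := r) hcj hβj
    have hrE : |r| ≤ ∑ k ∈ Finset.univ.erase j, E k * |β k| :=
      hrb c (fun k => by simp only [hE]; linarith [abs_nonneg (c' k)])
    have hfr := hfrac r hrE (c j) hcj (min_le_left _ _)
    calc aG X y μ σ j β = (|β j| * aL X y β) * Pr β := by rw [aG]; ring
      _ ≤ (β j * min 1 (Real.exp (c j * β j + r))) * Pr β := by
          apply mul_le_mul_of_nonneg_right ?_ hPr0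
          rw [abs_of_nonneg hβj, ← hsum]
          exact mul_le_mul_of_nonneg_left hLb hβj
      _ ≤ (√(β j) * √((1 + max r 0) / (-c j))) * Pr β :=
          mul_le_mul_of_nonneg_right hkey hPr0
      _ ≤ (√(β j) * (√(T⁻¹) * (1 + ∑ k ∈ Finset.univ.erase j, √(E k) * √|β k|))) * Pr β := by
          apply mul_le_mul_of_nonneg_right ?_ hPr0
          exact mul_le_mul_of_nonneg_left hfr (Real.sqrt_nonneg _)
      _ = W β := by simp only [hW]; rw [abs_of_nonneg hβj]; ring
  · -- use c'
    have hLb : aL X y β ≤ min 1 (Real.exp (∑ k, c' k * β k)) := aL_le_min X y i₂ β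
    have hsum : ∑ k, c' k * β k = c' j * β j + ∑ k ∈ Finset.univ.erase j, c' k * β k :=
      (Finset.add_sum_erase _ _ (Finset.mem_univ j)).symm
    set r : ℝ := ∑ k ∈ Finset.univ.erase j, c' k * β k with hr
    have hβj' : 0 ≤ -β j := by linarith
    have hkey := aux_key (a := -(c' j)) (r := r) (x := -β j) (by linarith) hβj'
    have hax : -(c' j) * (-β j) + r = c' j * β j + r := by ring
    rw [hax, neg_neg] at hkey
    have hrE : |r| ≤ ∑ k ∈ Finset.univ.erase j, E k * |β k| :=
      hrb c' (fun k => by simp only [hE]; linarith [abs_nonneg (c k)])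
    have hfr := hfrac r hrE (-(c' j)) (by linarith) (by rw [neg_neg]; exact min_le_right _ _)
    rw [neg_neg] at hfr
    calc aG X y μ σ j β = (|β j| * aL X y β) * Pr β := by rw [aG]; ring
      _ ≤ ((-β j) * min 1 (Real.exp (c' j * β j + r))) * Pr β := by
          apply mul_le_mul_of_nonneg_right ?_ hPr0
          rw [abs_of_neg hβj, ← hsum]
          exact mul_le_mul_of_nonneg_left hLb (by linarith)
      _ ≤ (√(-β j) * √((1 + max r 0) / (c' j))) * Pr β :=
          mul_le_mul_of_nonneg_right hkey hPr0
      _ ≤ (√(-β j) * (√(T⁻¹) * (1 + ∑ k ∈ Finset.univ.erase j, √(E k) * √|β k|))) * Pr β := by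
          apply mul_le_mul_of_nonneg_right ?_ hPr0
          exact mul_le_mul_of_nonneg_left hfr (Real.sqrt_nonneg _)
      _ = W β := by simp only [hW]; rw [abs_of_neg hβj]; ring

lemma aux_fwd {n p : ℕ} (X : Fin n → Fin p → ℝ) (y : Fin n → Bool) (μ σ : Fin p → ℝ)
    (hσ : ∀ k, 0 < σ k) (j : Fin p) (t : ℝ) (ht : t = 1 ∨ t = -1)
    (hsep : ∀ i, (y i = true → 0 ≤ t * X i j) ∧ (y i = false → t * X i j ≤ 0)) :
    ¬ Integrable (aG X y μ σ j) := by
  classical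
  intro hI
  have ht2 : t * t = 1 := by rcases ht with h | h <;> rw [h] <;> norm_num
  set B : Fin p → ℝ := fun k => ∑ i, |X i k| with hB
  set f : Fin p → ℝ → ℝ := fun k x =>
    (if k = j then (if 0 ≤ t * x then |x| else 0) else Real.exp (-B k * |x|))
      * aCau (μ k) (σ k) x with hf
  have hf_nonneg : ∀ k x, 0 ≤ f k x := by
    intro k x
    apply mul_nonneg _ (aCau_pos (hσ k) (μ k) x).le
    split_ifs <;> simp [abs_nonneg, (Real.exp_pos _).le]
  have hf_meas : ∀ k, Measurable (f k) := by
    intro k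
    apply Measurable.mul _ (aCau_cont (hσ k) (μ k)).measurable
    split_ifs with hk
    · apply Measurable.ite _ measurable_abs measurable_const
      exact measurableSet_le measurable_const (measurable_id.const_mul t)
    · exact Real.measurable_exp.comp (measurable_abs.const_mul (-B k))
  set h : (Fin p → ℝ) → ℝ := fun β => (2 ^ n : ℝ)⁻¹ * ∏ k, f k (β k) with hh
  have hh_nonneg : ∀ β, 0 ≤ h β := by
    intro β
    apply mul_nonneg (by positivity)
    exact Finset.prod_nonneg (fun k _ => hf_nonneg k (β k))
  -- pointwise bound h ≤ aG
  have hle : ∀ β, h β ≤ aG X y μ σ j β := by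
    intro β
    by_cases hc : 0 ≤ t * β j
    · have hfj : f j (β j) = |β j| * aCau (μ j) (σ j) (β j) := by
        simp [hf, hc]
      have hprodsplit : ∏ k, f k (β k)
          = f j (β j) * ∏ k ∈ Finset.univ.erase j, f k (β k) :=
        (Finset.mul_prod_erase _ _ (Finset.mem_univ j)).symm
      have herase : ∏ k ∈ Finset.univ.erase j, f k (β k)
          = (∏ k ∈ Finset.univ.erase j, Real.exp (-B k * |β k|))
            * ∏ k ∈ Finset.univ.erase j, aCau (μ k) (σ k) (β k) := by
        rw [← Finset.prod_mul_distrib]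
        apply Finset.prod_congr rfl
        intro k hk
        simp [hf, Finset.ne_of_mem_erase hk]
      have hPrsplit : aPr μ σ β
          = aCau (μ j) (σ j) (β j) * ∏ k ∈ Finset.univ.erase j, aCau (μ k) (σ k) (β k) :=
        (Finset.mul_prod_erase _ _ (Finset.mem_univ j)).symm
      -- likelihood lower bound
      have hLlow : (2 ^ n : ℝ)⁻¹ * ∏ k ∈ Finset.univ.erase j, Real.exp (-B k * |β k|)
          ≤ aL X y β := by
        have hform : (2 ^ n : ℝ)⁻¹ * ∏ k ∈ Finset.univ.erase j, Real.exp (-B k * |β k|)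
            = ∏ i : Fin n, (1 / 2 * Real.exp (-(∑ k ∈ Finset.univ.erase j, |X i k| * |β k|))) := by
          have hBsum : ∑ k ∈ Finset.univ.erase j, -B k * |β k|
              = ∑ i : Fin n, -(∑ k ∈ Finset.univ.erase j, |X i k| * |β k|) := by
            simp only [neg_mul]
            rw [Finset.sum_neg_distrib, Finset.sum_neg_distrib, neg_inj, Finset.sum_comm]
            apply Finset.sum_congr rfl
            intro k _
            simp only [hB]
            rw [Finset.sum_mul]
          rw [Finset.prod_mul_distrib, Finset.prod_const, Finset.card_univ, Fintype.card_fin,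
            ← Real.exp_sum, ← Real.exp_sum, ← hBsum]
          congr 1
          rw [one_div, inv_pow]
        rw [hform, aL]
        apply Finset.prod_le_prod
        · intro i _; positivity
        · intro i _
          set R : ℝ := ∑ k ∈ Finset.univ.erase j, |X i k| * |β k| with hR
          have hR0 : 0 ≤ R :=
            Finset.sum_nonneg (fun k _ => mul_nonneg (abs_nonneg _) (abs_nonneg _))
          have hρ : |∑ k ∈ Finset.univ.erase j, X i k * β k| ≤ R := by
            refine (Finset.abs_sum_le_sum_abs _ _).trans ?_
            apply Finset.sum_le_sum
            intro k _
            rw [abs_mul]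
          have hη : ∑ k, X i k * β k
              = X i j * β j + ∑ k ∈ Finset.univ.erase j, X i k * β k :=
            (Finset.add_sum_erase _ _ (Finset.mem_univ j)).symm
          have hXb : X i j * β j = (t * X i j) * (t * β j) := by
            rw [show (t * X i j) * (t * β j) = (t * t) * (X i j * β j) by ring, ht2, one_mul]
          unfold aFac
          rcases hyi : y i with _ | _
          · simp only [Bool.false_eq_true, if_false]
            apply aux_lower2 hR0
            have h1 : t * X i j ≤ 0 := (hsep i).2 hyi
            have h2 : X i j * β j ≤ 0 := by
              rw [hXb]; exact mul_nonpos_of_nonpos_of_nonneg h1 hc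
            rw [hη]
            have := abs_le.1 hρ
            linarith
          · simp only [if_true]
            apply aux_lower1 hR0
            have h1 : 0 ≤ t * X i j := (hsep i).1 hyi
            have h2 : 0 ≤ X i j * β j := by
              rw [hXb]; exact mul_nonneg h1 hc
            rw [hη]
            have := abs_le.1 hρ
            linarith
      calc h β = (|β j| * aCau (μ j) (σ j) (β j)
            * ∏ k ∈ Finset.univ.erase j, aCau (μ k) (σ k) (β k))
            * ((2 ^ n : ℝ)⁻¹ * ∏ k ∈ Finset.univ.erase j, Real.exp (-B k * |β k|)) := by
            rw [hh]
            simp only []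
            rw [hprodsplit, herase, hfj]
            ring
        _ ≤ (|β j| * aCau (μ j) (σ j) (β j)
            * ∏ k ∈ Finset.univ.erase j, aCau (μ k) (σ k) (β k)) * aL X y β := by
            apply mul_le_mul_of_nonneg_left hLlow
            apply mul_nonneg (mul_nonneg (abs_nonneg _) (aCau_pos (hσ j) (μ j) _).le)
            exact Finset.prod_nonneg (fun k _ => (aCau_pos (hσ k) (μ k) _).le)
        _ = aG X y μ σ j β := by
            rw [aG, hPrsplit]
            ring
    · have hfj : f j (β j) = 0 := by simp [hf, hc]
      have : h β = 0 := by
        rw [hh]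
        simp only []
        rw [← Finset.mul_prod_erase _ _ (Finset.mem_univ j), hfj]
        ring
      rw [this]
      exact aG_nonneg X y μ σ hσ j β
  -- h is integrable
  have hh_meas : Measurable h := by
    apply Measurable.const_mul
    exact Finset.measurable_prod _ (fun k _ => (hf_meas k).comp (measurable_pi_apply k))
  have hIntH : Integrable h :=
    hI.mono' hh_meas.aestronglyMeasurable
      (ae_of_all _ (fun β => by rw [Real.norm_eq_abs, abs_of_nonneg (hh_nonneg β)]; exact hle β))
  -- lintegral computation
  set F : Fin p → ℝ → ENNReal := fun k x => ENNReal.ofReal (f k x) with hF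
  have hFmeas : ∀ k, Measurable (F k) := fun k => (hf_meas k).ennreal_ofReal
  have hlt := hIntH.lintegral_lt_top
  have hform : ∀ β, ENNReal.ofReal (h β)
      = ENNReal.ofReal ((2 ^ n : ℝ)⁻¹) * ∏ k, F k (β k) := by
    intro β
    rw [hh]
    simp only []
    rw [ENNReal.ofReal_mul (by positivity), ENNReal.ofReal_prod_of_nonneg
      (fun k _ => hf_nonneg k (β k))]
  rw [show (fun x : Fin p → ℝ => ENNReal.ofReal (h x))
      = fun x => ENNReal.ofReal ((2 ^ n : ℝ)⁻¹) * ∏ k, F k (x k) from funext hform] at hlt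
  rw [lintegral_const_mul _ (show Measurable fun x : Fin p → ℝ => ∏ k, F k (x k) from
      Finset.measurable_prod _ (fun k _ => (hFmeas k).comp (measurable_pi_apply k)))] at hlt
  rw [aux_lintegral_fin_prod F hFmeas] at hlt
  -- the j-th factor is infinite
  have hjtop : ∫⁻ x, F j x = ⊤ := by
    by_contra hne
    have hIntfj : Integrable (f j) := by
      refine ⟨(hf_meas j).aestronglyMeasurable, ?_⟩
      rw [hasFiniteIntegral_iff_ofReal (ae_of_all _ (hf_nonneg j))]
      exact lt_top_iff_ne_top.2 hne
    rcases ht with ht1 | ht1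
    · apply aux_not_integrableOn (hσ j) (μ j)
      apply (hIntfj.integrableOn (s := Ioi 0)).congr
      filter_upwards [ae_restrict_mem measurableSet_Ioi] with x hx
      have : 0 ≤ t * x := by rw [ht1, one_mul]; exact (mem_Ioi.1 hx).le
      simp [hf, this, aCau]
    · apply aux_not_integrableOn (hσ j) (-μ j)
      apply ((hIntfj.comp_neg).integrableOn (s := Ioi 0)).congr
      filter_upwards [ae_restrict_mem measurableSet_Ioi] with x hx
      have hx0 : (0:ℝ) < x := mem_Ioi.1 hx
      have hcond : 0 ≤ t * (-x) := by rw [ht1]; linarith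
      have : aCau (μ j) (σ j) (-x) = (π * σ j * (1 + (x - -μ j) ^ 2 / σ j ^ 2))⁻¹ := by
        rw [aCau]
        ring_nf
      simp only [hf, if_pos rfl, hcond, if_true, abs_neg, this]
  -- the other factors are nonzero
  have hothers : ∀ k ∈ Finset.univ.erase j, (∫⁻ x, F k x) ≠ 0 := by
    intro k hk
    have hpos : ∀ x, 0 < f k x := by
      intro x
      apply mul_pos _ (aCau_pos (hσ k) (μ k) x)
      rw [if_neg (Finset.ne_of_mem_erase hk)]
      exact Real.exp_pos _
    have hsupp : Function.support (F k) = univ := by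
      ext x
      simp only [Function.mem_support, hF, ne_eq, ENNReal.ofReal_eq_zero, not_le, mem_univ,
        iff_true]
      exact hpos x
    have hpos' : 0 < ∫⁻ x, F k x := by
      rw [lintegral_pos_iff_support (hFmeas k), hsupp, Real.volume_univ]
      exact ENNReal.zero_lt_top
    exact hpos'.ne'
  -- contradiction
  have hprodtop : ∏ k, ∫⁻ x, F k x = ⊤ := by
    rw [← Finset.mul_prod_erase _ _ (Finset.mem_univ j), hjtop]
    exact ENNReal.top_mul (Finset.prod_ne_zero_iff.2 hothers)
  rw [hprodtop, ENNReal.mul_top (by simp only [ne_eq, ENNReal.ofReal_eq_zero, not_le]; positivity)] at hlt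
  exact absurd hlt (by simp)

/-- In logistic regression with independent Cauchy priors `β_j ~ C(μ_j, σ_j)` with
arbitrary location parameters (design matrix of column rank greater than `1`, first
column all ones), the posterior mean `E(β_j | y)` exists if and only if `X_j` is not a
solitary separator. -/
theorem cauchy_location_posterior_mean_exists_iff (n p : ℕ) (hp : 0 < p)
    (X : Fin n → Fin p → ℝ) (y : Fin n → Bool)
    (hones : ∀ i, X i ⟨0, hp⟩ = 1)
    (hrank : 1 < (Matrix.of X).rank)
    (μ σ : Fin p → ℝ) (hσ : ∀ k, 0 < σ k) (j : Fin p) :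
    Integrable (fun β : Fin p → ℝ =>
      |β j| *
      ((∏ i, if y i then Real.exp (∑ k, X i k * β k) / (1 + Real.exp (∑ k, X i k * β k))
             else 1 / (1 + Real.exp (∑ k, X i k * β k))) *
       ∏ k, (π * σ k * (1 + (β k - μ k) ^ 2 / (σ k) ^ 2))⁻¹)) ↔
    ¬ ∃ s : ℝ, s ≠ 0 ∧ ∀ i,
      (y i = true → 0 ≤ s * X i j) ∧ (y i = false → s * X i j ≤ 0) := by
  classical
  have hG : (fun β : Fin p → ℝ =>
      |β j| *
      ((∏ i, if y i then Real.exp (∑ k, X i k * β k) / (1 + Real.exp (∑ k, X i k * β k))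
             else 1 / (1 + Real.exp (∑ k, X i k * β k))) *
       ∏ k, (π * σ k * (1 + (β k - μ k) ^ 2 / (σ k) ^ 2))⁻¹)) = aG X y μ σ j := rfl
  rw [hG]
  constructor
  · intro hI
    rintro ⟨s, hs0, hsep⟩
    set t : ℝ := if 0 < s then 1 else -1 with htd
    have ht : t = 1 ∨ t = -1 := by
      rw [htd]; split_ifs <;> simp
    have hsep' : ∀ i, (y i = true → 0 ≤ t * X i j) ∧ (y i = false → t * X i j ≤ 0) := by
      intro i
      obtain ⟨h1, h2⟩ := hsep i
      by_cases hpos : 0 < s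
      · have ht1 : t = 1 := by rw [htd, if_pos hpos]
        rw [ht1]
        exact ⟨fun hy => by nlinarith [h1 hy], fun hy => by nlinarith [h2 hy]⟩
      · have hneg : s < 0 := lt_of_le_of_ne (not_lt.1 hpos) hs0
        have ht1 : t = -1 := by rw [htd, if_neg hpos]
        rw [ht1]
        exact ⟨fun hy => by nlinarith [h1 hy], fun hy => by nlinarith [h2 hy]⟩
    exact aux_fwd X y μ σ hσ j t ht hsep' hI
  · intro hns
    apply aux_bwd X y μ σ hσ j
    · by_contra hno
      push_neg at hno
      apply hns
      refine ⟨1, one_ne_zero, fun i => ⟨fun hy => ?_, fun hy => ?_⟩⟩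
      · rw [one_mul]; exact (hno i).1 hy
      · rw [one_mul]; exact (hno i).2 hy
    · by_contra hno
      push_neg at hno
      apply hns
      refine ⟨-1, by norm_num, fun i => ⟨fun hy => ?_, fun hy => ?_⟩⟩
      · linarith [(hno i).1 hy]
      · linarith [(hno i).2 hy]
end

section
/- In probit regression with independent Cauchy priors, the sufficient integrability condition holds: for every ε > 0, both ∫₀^∞ β p(β) Φ(−εβ) dβ < ∞ and ∫₀^∞ β p(β) (1 − Φ(εβ)) dβ < ∞, where p is the C(0,σ) density. -/
open Real MeasureTheory Filter Set

lemma gauss_integrable : Integrable (fun s : ℝ => Real.exp (-s ^ 2 / 2)) := by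
  have h := integrable_exp_neg_mul_sq (b := (2⁻¹ : ℝ)) (by norm_num)
  refine h.congr (Eventually.of_forall fun x => ?_)
  ring_nf

lemma gauss_deriv (s : ℝ) :
    HasDerivAt (fun s : ℝ => Real.exp (-s ^ 2 / 2)) (-s * Real.exp (-s ^ 2 / 2)) s := by
  have h1 : HasDerivAt (fun s : ℝ => -s ^ 2 / 2) (-s) s := by
    have := ((hasDerivAt_pow 2 s).neg).div_const 2
    simpa using this.congr_deriv (by push_cast; ring)
  simpa [mul_comm] using h1.exp

lemma gauss_deriv_integrable : Integrable (fun s : ℝ => -s * Real.exp (-s ^ 2 / 2)) := by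
  have h := (integrable_mul_exp_neg_mul_sq (b := (2⁻¹ : ℝ)) (by norm_num)).neg
  refine h.congr (Eventually.of_forall fun x => ?_)
  simp only [Pi.neg_apply]
  ring_nf

lemma gauss_tendsto : Tendsto (fun s : ℝ => Real.exp (-s ^ 2 / 2)) atBot (nhds 0) := by
  apply Real.tendsto_exp_atBot.comp
  have h1 : Tendsto (fun s : ℝ => s ^ 2) atBot atTop := by
    have h0 : Tendsto (fun s : ℝ => (-s) ^ 2) atBot atTop :=
      (tendsto_pow_atTop (two_ne_zero)).comp tendsto_neg_atBot_atTop
    simpa [neg_sq] using h0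
  have h2 : Tendsto (fun s : ℝ => -s ^ 2) atBot atBot := by
    have := tendsto_neg_atTop_atBot.comp h1
    exact this
  exact h2.atBot_div_const (by norm_num)

lemma gauss_int_Iic (a : ℝ) :
    ∫ s in Set.Iic a, -s * Real.exp (-s ^ 2 / 2) = Real.exp (-a ^ 2 / 2) := by
  have := integral_Iic_of_hasDerivAt_of_tendsto
    (f := fun s : ℝ => Real.exp (-s ^ 2 / 2)) (f' := fun s => -s * Real.exp (-s ^ 2 / 2))
    (a := a) (m := 0)
    (gauss_deriv a).continuousAt.continuousWithinAt
    (fun x _ => gauss_deriv x) gauss_deriv_integrable.integrableOn gauss_tendsto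
  simpa using this

lemma stdNormalCDF_nonneg (t : ℝ) : 0 ≤ stdNormalCDF t := by
  apply integral_nonneg
  intro s
  positivity

lemma sqrt_two_pi_pos : (0:ℝ) < Real.sqrt (2 * π) := by
  positivity

/-- total mass 1 -/
lemma gauss_total : ∫ s : ℝ, (Real.sqrt (2 * π))⁻¹ * Real.exp (-s ^ 2 / 2) = 1 := by
  rw [integral_const_mul]
  have h : ∫ s : ℝ, Real.exp (-s ^ 2 / 2) = Real.sqrt (2 * π) := by
    have := integral_gaussian (2⁻¹ : ℝ)
    rw [show π / (2⁻¹ : ℝ) = 2 * π by ring] at this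
    rw [← this]
    congr 1 with x
    ring_nf
  rw [h, inv_mul_cancel₀ (ne_of_gt sqrt_two_pi_pos)]

lemma stdNormalCDF_neg (t : ℝ) : stdNormalCDF (-t) = 1 - stdNormalCDF t := by
  have hint : Integrable (fun s : ℝ => (Real.sqrt (2 * π))⁻¹ * Real.exp (-s ^ 2 / 2)) :=
    gauss_integrable.const_mul _
  have hsplit := integral_add_compl (measurableSet_Iic (a := t)) hint
  rw [compl_Iic] at hsplit
  have hflip : ∫ s in Set.Ioi t, (Real.sqrt (2 * π))⁻¹ * Real.exp (-s ^ 2 / 2)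
      = ∫ s in Set.Iic (-t), (Real.sqrt (2 * π))⁻¹ * Real.exp (-s ^ 2 / 2) := by
    rw [← integral_comp_neg_Ioi]
    congr 1 with s
    ring_nf
  rw [gauss_total] at hsplit
  unfold stdNormalCDF
  rw [← hflip]
  linarith

/-- Gaussian tail bound. -/
lemma stdNormalCDF_le (t : ℝ) (ht : 0 < t) :
    stdNormalCDF (-t) ≤ (Real.sqrt (2 * π))⁻¹ * (Real.exp (-t ^ 2 / 2) / t) := by
  unfold stdNormalCDF
  rw [integral_const_mul]
  apply mul_le_mul_of_nonneg_left _ (le_of_lt (inv_pos.mpr sqrt_two_pi_pos))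
  have hmono : ∫ s in Set.Iic (-t), Real.exp (-s ^ 2 / 2)
      ≤ ∫ s in Set.Iic (-t), (-s / t) * Real.exp (-s ^ 2 / 2) := by
    apply setIntegral_mono_on gauss_integrable.integrableOn
    · have : Integrable (fun s : ℝ => t⁻¹ * (-s * Real.exp (-s ^ 2 / 2))) :=
        gauss_deriv_integrable.const_mul _
      exact (this.congr (Eventually.of_forall fun x => by ring)).integrableOn
    · exact measurableSet_Iic
    · intro s hs
      have hst : t ≤ -s := by
        have : s ≤ -t := hs
        linarith
      have h1 : (1:ℝ) ≤ -s / t := (le_div_iff₀ ht).mpr (by linarith)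
      nlinarith [Real.exp_pos (-s ^ 2 / 2)]
  have hcalc : ∫ s in Set.Iic (-t), (-s / t) * Real.exp (-s ^ 2 / 2)
      = Real.exp (-t ^ 2 / 2) / t := by
    have : ∫ s in Set.Iic (-t), (-s / t) * Real.exp (-s ^ 2 / 2)
        = t⁻¹ * ∫ s in Set.Iic (-t), -s * Real.exp (-s ^ 2 / 2) := by
      rw [← integral_const_mul]
      congr 1 with s
      ring
    rw [this, gauss_int_Iic]
    rw [show (-t) ^ 2 = t ^ 2 by ring]
    ring
  linarith

lemma stdNormalCDF_measurable : Measurable stdNormalCDF := by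
  apply Monotone.measurable
  intro a b hab
  apply setIntegral_mono_set (gauss_integrable.const_mul _).integrableOn
  · exact Eventually.of_forall fun s => by positivity
  · exact Eventually.of_forall (Iic_subset_Iic.mpr hab)

/-- For the Cauchy `C(0,σ)` density `p(β) = 1/(πσ(1+β²/σ²))` and every `ε > 0`, both
`∫₀^∞ β p(β) Φ(−εβ) dβ` and `∫₀^∞ β p(β)(1 − Φ(εβ)) dβ` are finite. -/
theorem probit_sufficient_integrability (σ : ℝ) (hσ : 0 < σ) :
    ∀ ε : ℝ, 0 < ε →
      IntegrableOn
        (fun β : ℝ => β * (π * σ * (1 + β ^ 2 / σ ^ 2))⁻¹ * stdNormalCDF (-(ε * β)))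
        (Set.Ioi 0) ∧
      IntegrableOn
        (fun β : ℝ => β * (π * σ * (1 + β ^ 2 / σ ^ 2))⁻¹ * (1 - stdNormalCDF (ε * β)))
        (Set.Ioi 0) := by
  intro ε hε
  have hπ : (0:ℝ) < π := Real.pi_pos
  have key : IntegrableOn
      (fun β : ℝ => β * (π * σ * (1 + β ^ 2 / σ ^ 2))⁻¹ * stdNormalCDF (-(ε * β)))
      (Set.Ioi 0) := by
    set C : ℝ := (π * σ)⁻¹ * ((Real.sqrt (2 * π))⁻¹ * ε⁻¹) with hC
    have hg : IntegrableOn (fun β : ℝ => C * Real.exp (-(ε ^ 2 / 2) * β ^ 2)) (Set.Ioi 0) :=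
      ((integrable_exp_neg_mul_sq (by positivity : (0:ℝ) < ε ^ 2 / 2)).const_mul C).integrableOn
    apply Integrable.mono' hg
    · apply Measurable.aestronglyMeasurable
      apply Measurable.mul
      · exact measurable_id.mul ((measurable_const.mul
          ((measurable_const.add ((measurable_id.pow_const 2).div_const _)))).inv)
      · exact stdNormalCDF_measurable.comp ((measurable_const.mul measurable_id).neg)
    · filter_upwards [ae_restrict_mem measurableSet_Ioi] with β (hβ : 0 < β)
      have hden : (0:ℝ) < π * σ * (1 + β ^ 2 / σ ^ 2) := by positivity
      have hnn : 0 ≤ β * (π * σ * (1 + β ^ 2 / σ ^ 2))⁻¹ * stdNormalCDF (-(ε * β)) := by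
        have := stdNormalCDF_nonneg (-(ε * β))
        positivity
      rw [Real.norm_of_nonneg hnn]
      have htail := stdNormalCDF_le (ε * β) (by positivity)
      have hp : (π * σ * (1 + β ^ 2 / σ ^ 2))⁻¹ ≤ (π * σ)⁻¹ := by
        apply inv_anti₀ (by positivity)
        nlinarith [div_nonneg (sq_nonneg β) (sq_nonneg σ), mul_pos hπ hσ]
      calc β * (π * σ * (1 + β ^ 2 / σ ^ 2))⁻¹ * stdNormalCDF (-(ε * β))
          ≤ β * (π * σ)⁻¹ *
            ((Real.sqrt (2 * π))⁻¹ * (Real.exp (-(ε * β) ^ 2 / 2) / (ε * β))) := by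
            apply mul_le_mul
            · exact mul_le_mul_of_nonneg_left hp (le_of_lt hβ)
            · exact htail
            · exact stdNormalCDF_nonneg _
            · positivity
        _ = C * Real.exp (-(ε ^ 2 / 2) * β ^ 2) := by
            rw [hC]
            rw [show -(ε * β) ^ 2 / 2 = -(ε ^ 2 / 2) * β ^ 2 by ring]
            field_simp
  refine ⟨key, ?_⟩
  have heq : (fun β : ℝ => β * (π * σ * (1 + β ^ 2 / σ ^ 2))⁻¹ * (1 - stdNormalCDF (ε * β)))
      = (fun β : ℝ => β * (π * σ * (1 + β ^ 2 / σ ^ 2))⁻¹ * stdNormalCDF (-(ε * β))) := by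
    funext β
    rw [stdNormalCDF_neg]
  rw [heq]
  exact key
end

section
/- Let B₁,…,B_q be open half-spaces of the form B_k = {γ ∈ ℝ^{p−1} : c_k + v_kᵀγ < 0} with v_k ≠ 0, whose union is all of ℝ^{p−1}. Then there exist positive constants ε₁,…,ε_q such that the shrunken sets B̃_k = {γ : c_k + v_kᵀγ < −ε_k} still cover ℝ^{p−1}. -/
open scoped RealInnerProductSpace
open Filter Metric Topology

private lemma shrink_aux (m q : ℕ) (c : Fin q → ℝ) (v : Fin q → EuclideanSpace ℝ (Fin m)) :
    ∀ s : Finset (Fin q),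
      (∀ x : EuclideanSpace ℝ (Fin m), ∃ k ∈ s, c k + ⟪v k, x⟫ < 0) →
      ∃ ε : ℝ, 0 < ε ∧ ∀ x : EuclideanSpace ℝ (Fin m), ∃ k ∈ s, c k + ⟪v k, x⟫ < -ε := by
  classical
  intro s
  induction s using Finset.strongInduction with
  | _ s IH =>
  intro hcov
  by_contra hcon
  push_neg at hcon
  -- a sequence of "bad" points
  have h : ∀ n : ℕ, ∃ x : EuclideanSpace ℝ (Fin m),
      ∀ k ∈ s, -((n : ℝ) + 1)⁻¹ ≤ c k + ⟪v k, x⟫ :=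
    fun n => hcon ((n : ℝ) + 1)⁻¹ (by positivity)
  choose y hy using h
  set W : Submodule ℝ (EuclideanSpace ℝ (Fin m)) :=
    Submodule.span ℝ ((s.image v : Finset (EuclideanSpace ℝ (Fin m))) : Set (EuclideanSpace ℝ (Fin m))) with hW
  have hvW : ∀ k ∈ s, v k ∈ W := by
    intro k hk
    apply Submodule.subset_span
    simp only [Finset.coe_image, Set.mem_image, Finset.mem_coe]
    exact ⟨k, hk, rfl⟩
  set x : ℕ → EuclideanSpace ℝ (Fin m) := fun n => (W.orthogonalProjectionOnto (y n) : EuclideanSpace ℝ (Fin m)) with hxdef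
  have hxW : ∀ n, x n ∈ W := fun n => (W.orthogonalProjectionOnto (y n)).2
  have hinner : ∀ k ∈ s, ∀ n, ⟪v k, x n⟫ = ⟪v k, y n⟫ := by
    intro k hk n
    have horth : y n - x n ∈ Wᗮ := W.sub_starProjection_mem_orthogonal (y n)
    have h0 : ⟪v k, y n - x n⟫ = 0 := (Submodule.mem_orthogonal W (y n - x n)).1 horth (v k) (hvW k hk)
    rw [inner_sub_right] at h0
    linarith
  have hxk : ∀ n : ℕ, ∀ k ∈ s, -((n : ℝ) + 1)⁻¹ ≤ c k + ⟪v k, x n⟫ := by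
    intro n k hk
    rw [hinner k hk n]
    exact hy n k hk
  have hWclosed : IsClosed (W : Set (EuclideanSpace ℝ (Fin m))) :=
    Submodule.closed_of_finiteDimensional W
  by_cases htop : Tendsto (fun n => ‖x n‖) atTop atTop
  · -- unbounded case: extract recession direction
    obtain ⟨N, hN⟩ := (htop.eventually_ge_atTop 1).exists_forall_of_atTop
    have hN' : ∀ n ≥ N, (1 : ℝ) ≤ ‖x n‖ := hN
    set d : ℕ → EuclideanSpace ℝ (Fin m) := fun j => ‖x (N + j)‖⁻¹ • x (N + j) with hd
    have hxpos : ∀ j, (0 : ℝ) < ‖x (N + j)‖ := fun j =>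
      lt_of_lt_of_le one_pos (hN' (N + j) (Nat.le_add_right N j))
    have hd1 : ∀ j, ‖d j‖ = 1 := by
      intro j
      rw [hd]
      simp only [norm_smul, norm_inv, norm_norm]
      exact inv_mul_cancel₀ (ne_of_gt (hxpos j))
    have hdW : ∀ j, d j ∈ W := fun j => W.smul_mem _ (hxW _)
    have hKc : IsCompact (closedBall (0 : EuclideanSpace ℝ (Fin m)) 1 ∩ (W : Set (EuclideanSpace ℝ (Fin m)))) :=
      (isCompact_closedBall 0 1).inter_right hWclosed
    obtain ⟨b, hbK, ψ, hψ, hlim⟩ := hKc.tendsto_subseq (x := d)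
      (fun j => ⟨mem_closedBall_zero_iff.2 (le_of_eq (hd1 j)), hdW j⟩)
    have hbW : b ∈ W := hbK.2
    have hnormb : ‖b‖ = 1 := by
      have h1 : Tendsto (fun j => ‖d (ψ j)‖) atTop (𝓝 ‖b‖) := hlim.norm
      have h2 : (fun j => ‖d (ψ j)‖) = fun _ => (1 : ℝ) := funext fun j => hd1 (ψ j)
      rw [h2] at h1
      exact (tendsto_nhds_unique tendsto_const_nhds h1).symm
    have hnorminv : Tendsto (fun j => ‖x (N + ψ j)‖⁻¹) atTop (𝓝 0) := by
      refine Tendsto.inv_tendsto_atTop ?_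
      refine htop.comp (tendsto_atTop_mono (fun j => ?_) tendsto_id)
      exact le_trans (hψ.le_apply) (Nat.le_add_left _ _)
    have hvb : ∀ k ∈ s, (0 : ℝ) ≤ ⟪v k, b⟫ := by
      intro k hk
      have hmain : Tendsto (fun j => ⟪v k, d (ψ j)⟫) atTop (𝓝 ⟪v k, b⟫) :=
        tendsto_const_nhds.inner hlim
      have hlow : Tendsto (fun j => -(1 + |c k|) * ‖x (N + ψ j)‖⁻¹) atTop (𝓝 0) := by
        have := hnorminv.const_mul (-(1 + |c k|))
        simpa using this
      refine le_of_tendsto_of_tendsto' hlow hmain (fun j => ?_)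
      have hx1 : -(1 + |c k|) ≤ ⟪v k, x (N + ψ j)⟫ := by
        have h1 := hxk (N + ψ j) k hk
        have h2 : (1 : ℝ) ≤ ((N + ψ j : ℕ) : ℝ) + 1 := by
          have : (0:ℝ) ≤ ((N + ψ j : ℕ) : ℝ) := Nat.cast_nonneg _
          linarith
        have h3 : (((N + ψ j : ℕ) : ℝ) + 1)⁻¹ ≤ 1 := inv_le_one_of_one_le₀ h2
        have h4 : c k ≤ |c k| := le_abs_self _
        linarith
      have h5 : ⟪v k, d (ψ j)⟫ = ‖x (N + ψ j)‖⁻¹ * ⟪v k, x (N + ψ j)⟫ := by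
        rw [hd]; exact real_inner_smul_right _ _ _
      rw [h5]
      have h6 : (0:ℝ) ≤ ‖x (N + ψ j)‖⁻¹ := inv_nonneg.2 (norm_nonneg _)
      calc -(1 + |c k|) * ‖x (N + ψ j)‖⁻¹ = ‖x (N + ψ j)‖⁻¹ * (-(1 + |c k|)) := by ring
        _ ≤ ‖x (N + ψ j)‖⁻¹ * ⟪v k, x (N + ψ j)⟫ := mul_le_mul_of_nonneg_left hx1 h6
    -- there is k₀ with strictly positive inner product
    have hk0 : ∃ k₀ ∈ s, (0 : ℝ) < ⟪v k₀, b⟫ := by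
      by_contra hall
      push_neg at hall
      have hzero : ∀ k ∈ s, ⟪v k, b⟫ = 0 := fun k hk =>
        le_antisymm (hall k hk) (hvb k hk)
      have hWle : W ≤ (ℝ ∙ b)ᗮ := by
        rw [hW]
        refine Submodule.span_le.2 ?_
        intro u hu
        simp only [Finset.coe_image, Set.mem_image, Finset.mem_coe] at hu
        obtain ⟨k, hk, rfl⟩ := hu
        rw [SetLike.mem_coe, Submodule.mem_orthogonal_singleton_iff_inner_right]
        rw [real_inner_comm]
        exact hzero k hk
      have hbb := hWle hbW
      rw [Submodule.mem_orthogonal_singleton_iff_inner_right] at hbb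
      have : b = 0 := by rwa [inner_self_eq_zero] at hbb
      rw [this] at hnormb
      simp at hnormb
    obtain ⟨k₀, hk₀s, hk₀⟩ := hk0
    set s₀ : Finset (Fin q) := s.filter (fun k => ⟪v k, b⟫ = 0) with hs₀
    have hcov₀ : ∀ z : EuclideanSpace ℝ (Fin m), ∃ k ∈ s₀, c k + ⟪v k, z⟫ < 0 := by
      intro z
      obtain ⟨t₀, ht₀⟩ := (s.image fun k => (-(c k + ⟪v k, z⟫)) / ⟪v k, b⟫).exists_le
      obtain ⟨k, hk, hklt⟩ := hcov (z + t₀ • b)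
      have hsplit : c k + ⟪v k, z + t₀ • b⟫ = (c k + ⟪v k, z⟫) + t₀ * ⟪v k, b⟫ := by
        rw [inner_add_right, real_inner_smul_right]; ring
      rcases eq_or_lt_of_le (hvb k hk) with heq | hpos
      · refine ⟨k, Finset.mem_filter.2 ⟨hk, heq.symm⟩, ?_⟩
        rw [hsplit, ← heq] at hklt
        linarith
      · exfalso
        have hg : (-(c k + ⟪v k, z⟫)) / ⟪v k, b⟫ ≤ t₀ :=
          ht₀ _ (Finset.mem_image_of_mem _ hk)
        rw [div_le_iff₀ hpos] at hg
        rw [hsplit] at hklt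
        linarith
    have hssub : s₀ ⊂ s := by
      refine Finset.ssubset_iff_of_subset (Finset.filter_subset _ _) |>.2 ?_
      exact ⟨k₀, hk₀s, fun hmem => absurd (Finset.mem_filter.1 hmem).2 (ne_of_gt hk₀)⟩
    obtain ⟨ε, hε, hcov'⟩ := IH s₀ hssub hcov₀
    obtain ⟨z, hz⟩ := hcon ε hε
    obtain ⟨k, hk, hklt⟩ := hcov' z
    exact absurd hklt (not_lt.2 (hz k (Finset.filter_subset _ _ hk)))
  · -- bounded case: cluster point gives a point not covered
    rw [Filter.tendsto_atTop] at htop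
    push_neg at htop
    obtain ⟨C, hC⟩ := htop
    have hC' : ∃ᶠ n in atTop, ‖x n‖ ≤ C := hC.mono (fun n hn => hn.le)
    obtain ⟨φ, hφmono, hφ⟩ := extraction_of_frequently_atTop hC'
    have hKc : IsCompact (closedBall (0 : EuclideanSpace ℝ (Fin m)) C ∩ (W : Set (EuclideanSpace ℝ (Fin m)))) :=
      (isCompact_closedBall 0 C).inter_right hWclosed
    obtain ⟨b, _, ψ, hψ, hlim⟩ := hKc.tendsto_subseq (x := fun j => x (φ j))
      (fun j => ⟨mem_closedBall_zero_iff.2 (hφ j), hxW _⟩)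
    have hbge : ∀ k ∈ s, (0 : ℝ) ≤ c k + ⟪v k, b⟫ := by
      intro k hk
      have hmain : Tendsto (fun j => c k + ⟪v k, x (φ (ψ j))⟫) atTop (𝓝 (c k + ⟪v k, b⟫)) :=
        tendsto_const_nhds.add (tendsto_const_nhds.inner hlim)
      have hlow : Tendsto (fun j : ℕ => -((j : ℝ) + 1)⁻¹) atTop (𝓝 0) := by
        have h1 : Tendsto (fun j : ℕ => ((j : ℝ) + 1)⁻¹) atTop (𝓝 0) := by
          have := tendsto_one_div_add_atTop_nhds_zero_nat (𝕜 := ℝ)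
          simpa [one_div] using this
        have := h1.neg
        simpa using this
      refine le_of_tendsto_of_tendsto' hlow hmain (fun j => ?_)
      have h1 := hxk (φ (ψ j)) k hk
      have h2 : (j : ℝ) + 1 ≤ ((φ (ψ j) : ℕ) : ℝ) + 1 := by
        have hj : j ≤ φ (ψ j) := le_trans hψ.le_apply hφmono.le_apply
        have : (j : ℝ) ≤ ((φ (ψ j) : ℕ) : ℝ) := by exact_mod_cast hj
        linarith
      have h3 : (((φ (ψ j) : ℕ) : ℝ) + 1)⁻¹ ≤ ((j : ℝ) + 1)⁻¹ := by
        apply inv_anti₀ (by positivity) h2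
      linarith
    obtain ⟨k, hk, hklt⟩ := hcov b
    exact absurd hklt (not_lt.2 (hbge k hk))

/-- If open half-spaces `B_k = {γ : c_k + v_kᵀγ < 0}` with `v_k ≠ 0` cover `ℝ^{p−1}`, then
there are positive `ε_k` such that the shrunken half-spaces `{γ : c_k + v_kᵀγ < −ε_k}`
still cover `ℝ^{p−1}`. -/
theorem shrink_halfspace_cover (m q : ℕ) (c : Fin q → ℝ) (v : Fin q → Fin m → ℝ)
    (hv : ∀ k, v k ≠ 0)
    (hcov : (⋃ k, {γ : Fin m → ℝ | c k + ∑ l, v k l * γ l < 0}) = Set.univ) :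
    ∃ ε : Fin q → ℝ, (∀ k, 0 < ε k) ∧
      (⋃ k, {γ : Fin m → ℝ | c k + ∑ l, v k l * γ l < -ε k}) = Set.univ := by
  classical
  set v' : Fin q → EuclideanSpace ℝ (Fin m) := fun k => (WithLp.equiv 2 (Fin m → ℝ)).symm (v k) with hv'
  have hinner : ∀ (k : Fin q) (γ : Fin m → ℝ),
      ⟪v' k, (WithLp.equiv 2 (Fin m → ℝ)).symm γ⟫ = ∑ l, v k l * γ l := by
    intro k γ
    simp [hv', PiLp.inner_apply]
    exact Finset.sum_congr rfl fun _ _ => mul_comm _ _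
  have hcov' : ∀ x : EuclideanSpace ℝ (Fin m), ∃ k ∈ (Finset.univ : Finset (Fin q)),
      c k + ⟪v' k, x⟫ < 0 := by
    intro x
    have hx : (WithLp.equiv 2 (Fin m → ℝ)) x ∈ (⋃ k, {γ : Fin m → ℝ | c k + ∑ l, v k l * γ l < 0}) := by
      rw [hcov]; trivial
    obtain ⟨k, hk⟩ := Set.mem_iUnion.1 hx
    refine ⟨k, Finset.mem_univ k, ?_⟩
    have := hinner k ((WithLp.equiv 2 (Fin m → ℝ)) x)
    rw [show (WithLp.equiv 2 (Fin m → ℝ)).symm ((WithLp.equiv 2 (Fin m → ℝ)) x) = x from rfl] at this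
    rw [this]
    exact hk
  obtain ⟨ε, hε, hcover⟩ := shrink_aux m q c v' Finset.univ hcov'
  refine ⟨fun _ => ε, fun _ => hε, ?_⟩
  rw [Set.eq_univ_iff_forall]
  intro γ
  obtain ⟨k, _, hk⟩ := hcover ((WithLp.equiv 2 (Fin m → ℝ)).symm γ)
  rw [hinner k γ] at hk
  exact Set.mem_iUnion.2 ⟨k, hk⟩
end
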